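/- arXiv:1902.04496 — 6 statements merged into one kernel-verified Lean document; each statement's English description precedes it below -/
import Mathlib

section
/- Let v ≥ 2 be an integer and let ρ = (ρ_1,…,ρ_{v−1}) and ρ′ = (ρ′_1,…,ρ′_{v−1}) be tuples of nonnegative real numbers. Suppose there exists l ∈ {1,…,v−1} such that S_j(ρ) = S_j(ρ′) for all 1 ≤ j < l and S_l(ρ′) < S_l(ρ). Then there exists y₀ > 0 such that for every real y ≥ y₀ one has ∑_{i=1}^{v−1} 1/(vy + ρ_i) < ∑_{i=1}^{v−1} 1/(vy + ρ′_i). -/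
/-- The `j`-th elementary symmetric polynomial of the tuple `z`. -/
noncomputable def elemSymm {n : ℕ} (z : Fin n → ℝ) (j : ℕ) : ℝ :=
  ∑ J ∈ Finset.univ.powersetCard j, ∏ i ∈ J, z i

open Polynomial Finset

lemma elemSymm_zero {n : ℕ} (z : Fin n → ℝ) : elemSymm z 0 = 1 := by
  simp [elemSymm]

lemma coeff_prodP {n : ℕ} (z : Fin n → ℝ) {k : ℕ} (hk : k ≤ n) :
    (∏ i, (X + C (z i))).coeff k = elemSymm z (n - k) := by
  rw [Finset.prod_X_add_C_coeff _ _ (by simpa using hk)]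
  simp [elemSymm]

lemma monic_prodP {n : ℕ} (z : Fin n → ℝ) : (∏ i, (X + C (z i))).Monic :=
  monic_prod_of_monic _ _ fun i _ => monic_X_add_C _

lemma natDegree_prodP {n : ℕ} (z : Fin n → ℝ) : (∏ i, (X + C (z i))).natDegree = n := by
  rw [natDegree_prod_of_monic _ _ fun i _ => monic_X_add_C _]
  simp

lemma derivative_finset_prod {ι : Type*} [DecidableEq ι] (s : Finset ι)
    (f : ι → Polynomial ℝ) :
    derivative (∏ i ∈ s, f i) = ∑ i ∈ s, (∏ j ∈ s.erase i, f j) * derivative (f i) := by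
  classical
  induction s using Finset.induction_on with
  | empty => simp
  | insert a s hnotmem ih =>
    rw [Finset.prod_insert hnotmem, derivative_mul, ih, Finset.sum_insert hnotmem]
    rw [Finset.erase_insert hnotmem, Finset.mul_sum]
    congr 1
    · ring
    · refine Finset.sum_congr rfl fun i hi => ?_
      rw [Finset.erase_insert_of_ne (by rintro rfl; exact hnotmem hi),
        Finset.prod_insert (fun hmem => hnotmem (Finset.mem_of_mem_erase hmem))]
      ring

lemma sum_formula {n : ℕ} (z : Fin n → ℝ) (x : ℝ) (hx : 0 < x) (hz : ∀ i, 0 ≤ z i) :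
    ∑ i, 1 / (x + z i) =
      eval x (derivative (∏ i, (X + C (z i)))) / eval x (∏ i, (X + C (z i))) := by
  have hpos : ∀ i : Fin n, 0 < x + z i := fun i => by linarith [hz i]
  have hP : eval x (∏ i, (X + C (z i))) = ∏ i, (x + z i) := by simp [eval_prod]
  have hP' : eval x (derivative (∏ i, (X + C (z i)))) =
      ∑ i, ∏ j ∈ univ.erase i, (x + z j) := by
    rw [derivative_finset_prod]
    simp [eval_finset_sum, eval_prod]
  rw [hP, hP', Finset.sum_div]
  refine Finset.sum_congr rfl fun i _ => ?_
  have he : (0:ℝ) < ∏ j ∈ univ.erase i, (x + z j) := Finset.prod_pos fun j _ => hpos j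
  rw [← Finset.mul_prod_erase univ _ (mem_univ i),
    div_eq_div_iff (hpos i).ne' (mul_pos (hpos i) he).ne']
  ring

lemma aux_main (n : ℕ) (hn : 1 ≤ n) (ρ ρ' : Fin n → ℝ)
    (hρ : ∀ i, 0 ≤ ρ i) (hρ' : ∀ i, 0 ≤ ρ' i)
    (l : ℕ) (hl1 : 1 ≤ l) (hl2 : l ≤ n)
    (heq : ∀ j, 1 ≤ j → j < l → elemSymm ρ j = elemSymm ρ' j)
    (hlt : elemSymm ρ' l < elemSymm ρ l) :
    ∃ a : ℝ, ∀ x : ℝ, a ≤ x → 0 < x →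
      ∑ i, 1 / (x + ρ i) < ∑ i, 1 / (x + ρ' i) := by
  set P := ∏ i, (X + C (ρ i)) with hPdef
  set Q := ∏ i, (X + C (ρ' i)) with hQdef
  set D := P - Q with hDdef
  set c := elemSymm ρ l - elemSymm ρ' l with hcdef
  have hc : 0 < c := sub_pos.mpr hlt
  set m := n - l with hmdef
  have hml : m + l = n := Nat.sub_add_cancel hl2
  have hPdeg : P.natDegree = n := natDegree_prodP ρ
  have hQdeg : Q.natDegree = n := natDegree_prodP ρ'
  have hQn : Q.coeff n = 1 := by
    have := (monic_prodP ρ').coeff_natDegree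
    rwa [← hQdef, hQdeg] at this
  have hDcoeff : ∀ k, m < k → D.coeff k = 0 := by
    intro k hk
    rcases le_or_gt k n with hkn | hkn
    · rw [hDdef, coeff_sub, hPdef, hQdef, coeff_prodP ρ hkn, coeff_prodP ρ' hkn]
      rcases Nat.eq_zero_or_pos (n - k) with h0 | h1
      · rw [h0, elemSymm_zero, elemSymm_zero, sub_self]
      · rw [heq _ h1 (by omega), sub_self]
    · rw [hDdef, coeff_sub,
        coeff_eq_zero_of_natDegree_lt (by rw [hPdeg]; exact hkn),
        coeff_eq_zero_of_natDegree_lt (by rw [hQdeg]; exact hkn), sub_self]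
  have hDdeg : D.natDegree ≤ m := natDegree_le_iff_coeff_eq_zero.mpr hDcoeff
  have hDm : D.coeff m = c := by
    rw [hDdef, coeff_sub, hPdef, hQdef, coeff_prodP ρ (by omega), coeff_prodP ρ' (by omega)]
    have : n - m = l := by omega
    rw [this, hcdef]
  set N := derivative P * Q - derivative Q * P with hNdef
  have hN2 : N = derivative D * Q - derivative Q * D := by
    rw [hNdef, hDdef, derivative_sub]; ring
  set d := (n - 1) + m with hddef
  have hcast : ((n - 1 : ℕ) : ℝ) + 1 = (n : ℝ) := by
    rw [Nat.cast_sub hn]; push_cast; ring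
  have hQ'coeff : (derivative Q).coeff (n - 1) = (n : ℝ) := by
    rw [coeff_derivative]
    have h1 : n - 1 + 1 = n := by omega
    rw [h1, hQn, hcast, one_mul]
  have hcoeff2 : (derivative Q * D).coeff d = (n : ℝ) * c := by
    rw [hddef, coeff_mul_add_eq_of_natDegree_le
      (le_trans (natDegree_derivative_le Q) (by rw [hQdeg])) hDdeg, hQ'coeff, hDm]
  have hcoeff1 : (derivative D * Q).coeff d = (m : ℝ) * c := by
    rcases Nat.eq_zero_or_pos m with hm0 | hm0
    · have hD : D = C (D.coeff 0) := eq_C_of_natDegree_le_zero (by omega)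
      rw [hD, derivative_C, zero_mul, coeff_zero, hm0, Nat.cast_zero, zero_mul]
    · have hdd : d = (m - 1) + n := by omega
      rw [hdd, coeff_mul_add_eq_of_natDegree_le
        (le_trans (natDegree_derivative_le D) (Nat.sub_le_sub_right hDdeg 1))
        (le_of_eq hQdeg), coeff_derivative]
      have h1 : m - 1 + 1 = m := by omega
      rw [h1, hDm, hQn, mul_one, Nat.cast_sub hm0]
      push_cast; ring
  have hNcoeff : N.coeff d = -(l : ℝ) * c := by
    rw [hN2, coeff_sub, hcoeff1, hcoeff2]
    have : (m : ℝ) - (n : ℝ) = -(l : ℝ) := by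
      have : (m : ℝ) + (l : ℝ) = (n : ℝ) := by exact_mod_cast congrArg (Nat.cast (R := ℝ)) hml
      linarith
    nlinarith [this]
  have hNneg : N.coeff d < 0 := by
    rw [hNcoeff]
    have : (1 : ℝ) ≤ (l : ℝ) := by exact_mod_cast hl1
    nlinarith
  have hNdegle : N.natDegree ≤ d := by
    rw [hN2]
    refine le_trans (natDegree_sub_le _ _) (max_le ?_ ?_)
    · rcases Nat.eq_zero_or_pos m with hm0 | hm0
      · have hD : D = C (D.coeff 0) := eq_C_of_natDegree_le_zero (by omega)
        rw [hD, derivative_C, zero_mul, natDegree_zero]; omega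
      · refine le_trans (natDegree_mul_le) ?_
        have h1 : (derivative D).natDegree ≤ m - 1 :=
          le_trans (natDegree_derivative_le D) (Nat.sub_le_sub_right hDdeg 1)
        omega
    · refine le_trans (natDegree_mul_le) ?_
      have h1 : (derivative Q).natDegree ≤ n - 1 :=
        le_trans (natDegree_derivative_le Q) (by rw [hQdeg])
      omega
  have hNdeg : N.natDegree = d :=
    le_antisymm hNdegle (le_natDegree_of_ne_zero (by rw [hNcoeff] at hNneg ⊢; exact hNneg.ne))
  have hNlead : N.leadingCoeff = N.coeff d := by rw [leadingCoeff, hNdeg]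
  obtain ⟨a, ha⟩ : ∃ a : ℝ, ∀ x, a ≤ x → eval x N < 0 := by
    rcases Nat.eq_zero_or_pos d with hd0 | hd0
    · refine ⟨0, fun x _ => ?_⟩
      have hNC : N = C (N.coeff 0) := eq_C_of_natDegree_le_zero (by omega)
      rw [hNC, eval_C]
      rw [hd0] at hNneg
      exact hNneg
    · have hdeg' : 0 < N.degree := natDegree_pos_iff_degree_pos.mp (by omega)
      have ht := Polynomial.tendsto_atBot_of_leadingCoeff_nonpos N hdeg'
        (le_of_lt (by rw [hNlead]; exact hNneg))
      have := ht.eventually (Filter.eventually_lt_atBot (0 : ℝ))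
      rw [Filter.eventually_atTop] at this
      obtain ⟨a, ha⟩ := this
      exact ⟨a, fun x hx => ha x hx⟩
  refine ⟨a, fun x hxa hx0 => ?_⟩
  rw [sum_formula ρ x hx0 hρ, sum_formula ρ' x hx0 hρ']
  have hpos : ∀ i : Fin n, 0 < x + ρ i := fun i => by linarith [hρ i]
  have hpos' : ∀ i : Fin n, 0 < x + ρ' i := fun i => by linarith [hρ' i]
  have hPpos : 0 < eval x P := by
    rw [hPdef, eval_prod]
    exact Finset.prod_pos fun i _ => by simpa using hpos i
  have hQpos : 0 < eval x Q := by
    rw [hQdef, eval_prod]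
    exact Finset.prod_pos fun i _ => by simpa using hpos' i
  rw [div_lt_div_iff₀ hPpos hQpos]
  have hval := ha x hxa
  rw [hNdef] at hval
  simp only [eval_sub, eval_mul] at hval
  linarith

theorem stmt_1 (v : ℕ) (hv : 2 ≤ v) (ρ ρ' : Fin (v - 1) → ℝ)
    (hρ : ∀ i, 0 ≤ ρ i) (hρ' : ∀ i, 0 ≤ ρ' i)
    (h : ∃ l, 1 ≤ l ∧ l ≤ v - 1 ∧
      (∀ j, 1 ≤ j → j < l → elemSymm ρ j = elemSymm ρ' j) ∧
      elemSymm ρ' l < elemSymm ρ l) :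
    ∃ y₀ : ℝ, 0 < y₀ ∧ ∀ y : ℝ, y₀ ≤ y →
      ∑ i, 1 / ((v : ℝ) * y + ρ i) < ∑ i, 1 / ((v : ℝ) * y + ρ' i) := by
  obtain ⟨l, hl1, hl2, heq, hlt⟩ := h
  obtain ⟨a, ha⟩ := aux_main (v - 1) (by omega) ρ ρ' hρ hρ' l hl1 hl2 heq hlt
  refine ⟨max a 1, lt_of_lt_of_le zero_lt_one (le_max_right a 1), fun y hy => ?_⟩
  have hy1 : 1 ≤ y := le_trans (le_max_right a 1) hy
  have hv2 : (2 : ℝ) ≤ (v : ℝ) := by exact_mod_cast hv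
  have hx0 : 0 < (v : ℝ) * y := by nlinarith
  have hxa : a ≤ (v : ℝ) * y := by
    have h1 : a ≤ y := le_trans (le_max_left a 1) hy
    nlinarith
  exact ha _ hxa hx0
end

section
/- Let v ≥ 4 be an integer, let B ≥ 1 be a real number, and set m = ⌊(v−2)/2⌋. Let ρ = (ρ_1,…,ρ_{v−1}) and ρ′ = (ρ′_1,…,ρ′_{v−1}) be tuples of real numbers with 0 ≤ ρ_i ≤ 2B and 0 ≤ ρ′_i ≤ 2B for all i, such that S_1(ρ) = S_1(ρ′) and S_2(ρ) ≥ S_2(ρ′) + 1. Then for every real y ≥ 2^{v−2}·B^{v−1}·(2v−5)·C(v−1,m)² + 1/v, one has ∑_{i=1}^{v−1} 1/(vy + ρ_i) < ∑_{i=1}^{v−1} 1/(vy + ρ′_i). -/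
open Finset

lemma sum_powerset_one' {α : Type*} [DecidableEq α] (s : Finset α) (z : α → ℝ) :
    ∑ J ∈ s.powersetCard 1, ∏ i ∈ J, z i = ∑ i ∈ s, z i := by
  rw [powersetCard_one, sum_map]
  simp

lemma sq_sum_aux {α : Type*} [DecidableEq α] (s : Finset α) (z : α → ℝ) :
    (∑ i ∈ s, z i) ^ 2 =
      ∑ i ∈ s, (z i) ^ 2 + 2 * ∑ J ∈ s.powersetCard 2, ∏ i ∈ J, z i := by
  induction s using Finset.induction with
  | empty =>
    have h : (∅ : Finset α).powersetCard 2 = ∅ := by simp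
    simp [h]
  | @insert x s hx ih =>
    have hdisj : Disjoint (s.powersetCard 2) ((s.powersetCard 1).image (insert x)) := by
      rw [Finset.disjoint_left]
      intro J hJ hJ'
      have hJs : J ⊆ s := (Finset.mem_powersetCard.mp hJ).1
      obtain ⟨K, _, rfl⟩ := Finset.mem_image.mp hJ'
      exact hx (hJs (Finset.mem_insert_self x K))
    have hinj : ∀ J1 ∈ s.powersetCard 1, ∀ J2 ∈ s.powersetCard 1,
        insert x J1 = insert x J2 → J1 = J2 := by
      intro J1 hJ1 J2 hJ2 h
      have h1 : x ∉ J1 := fun hc => hx ((Finset.mem_powersetCard.mp hJ1).1 hc)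
      have h2 : x ∉ J2 := fun hc => hx ((Finset.mem_powersetCard.mp hJ2).1 hc)
      rw [← Finset.erase_insert h1, ← Finset.erase_insert h2, h]
    have himg : ∑ J ∈ (s.powersetCard 1).image (insert x), ∏ i ∈ J, z i
        = z x * ∑ i ∈ s, z i := by
      rw [Finset.sum_image hinj, ← sum_powerset_one' s z, Finset.mul_sum]
      refine Finset.sum_congr rfl fun J hJ => ?_
      have hxJ : x ∉ J := fun hc => hx ((Finset.mem_powersetCard.mp hJ).1 hc)
      rw [Finset.prod_insert hxJ]
    rw [Finset.sum_insert hx, Finset.sum_insert hx,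
      show (2:ℕ) = Nat.succ 1 from rfl, Finset.powersetCard_succ_insert hx,
      Finset.sum_union hdisj, himg]
    ring_nf
    linarith [ih]

lemma elemSymm_one {n : ℕ} (z : Fin n → ℝ) : elemSymm z 1 = ∑ i, z i := by
  unfold elemSymm
  exact sum_powerset_one' _ _

lemma elemSymm_two {n : ℕ} (z : Fin n → ℝ) :
    (∑ i, z i) ^ 2 = ∑ i, (z i) ^ 2 + 2 * elemSymm z 2 := by
  unfold elemSymm
  exact sq_sum_aux _ _

theorem stmt_5 (v : ℕ) (hv : 4 ≤ v) (B : ℝ) (hB : 1 ≤ B) (m : ℕ)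
    (hm : m = (v - 2) / 2) (ρ ρ' : Fin (v - 1) → ℝ)
    (hρ : ∀ i, 0 ≤ ρ i ∧ ρ i ≤ 2 * B) (hρ' : ∀ i, 0 ≤ ρ' i ∧ ρ' i ≤ 2 * B)
    (hS1 : elemSymm ρ 1 = elemSymm ρ' 1)
    (hS2 : elemSymm ρ' 2 + 1 ≤ elemSymm ρ 2) :
    ∀ y : ℝ, 2 ^ (v - 2) * B ^ (v - 1) * (2 * (v : ℝ) - 5) * (Nat.choose (v - 1) m : ℝ) ^ 2
        + 1 / (v : ℝ) ≤ y →
      ∑ i, 1 / ((v : ℝ) * y + ρ i) < ∑ i, 1 / ((v : ℝ) * y + ρ' i) := by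
  intro y hy
  have hB0 : (0:ℝ) < B := lt_of_lt_of_le one_pos hB
  have hv4 : (4:ℝ) ≤ (v:ℝ) := by exact_mod_cast hv
  have hv0 : (0:ℝ) < (v:ℝ) := by linarith
  -- lower bound for the big constant
  have h1 : (4:ℝ) ≤ 2 ^ (v - 2) := by
    calc (4:ℝ) = 2 ^ 2 := by norm_num
    _ ≤ 2 ^ (v - 2) := by
      apply pow_le_pow_right₀ one_le_two
      omega
  have h2 : B ^ 3 ≤ B ^ (v - 1) := pow_le_pow_right₀ hB (by omega)
  have hB3 : (1:ℝ) ≤ B ^ 3 := one_le_pow₀ hB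
  have h3 : (3:ℝ) ≤ 2 * (v:ℝ) - 5 := by linarith
  have h4 : (1:ℝ) ≤ ((Nat.choose (v - 1) m : ℕ) : ℝ) := by
    have : 0 < Nat.choose (v - 1) m := Nat.choose_pos (by omega)
    exact_mod_cast this
  have hT : 12 * B ^ 3 ≤ 2 ^ (v - 2) * B ^ (v - 1) * (2 * (v : ℝ) - 5)
      * (Nat.choose (v - 1) m : ℝ) ^ 2 := by
    have hC2 : (1:ℝ) ≤ ((Nat.choose (v - 1) m : ℕ) : ℝ) ^ 2 := one_le_pow₀ h4
    calc 12 * B ^ 3 = 4 * B ^ 3 * 3 * 1 := by ring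
    _ ≤ 2 ^ (v - 2) * B ^ (v - 1) * (2 * (v : ℝ) - 5)
        * (Nat.choose (v - 1) m : ℝ) ^ 2 := by
      apply mul_le_mul _ hC2 (by norm_num) (by positivity)
      apply mul_le_mul _ h3 (by norm_num) (by positivity)
      apply mul_le_mul h1 h2 (by positivity) (by positivity)
  set x : ℝ := (v:ℝ) * y with hxdef
  have hyT : 12 * B ^ 3 + 1 / (v:ℝ) ≤ y := le_trans (by linarith) hy
  have hx : 12 * (v:ℝ) * B ^ 3 + 1 ≤ x := by
    have := mul_le_mul_of_nonneg_left hyT (le_of_lt hv0)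
    calc 12 * (v:ℝ) * B ^ 3 + 1 = (v:ℝ) * (12 * B ^ 3) + (v:ℝ) * (1/(v:ℝ)) := by
          field_simp
    _ ≤ x := by rw [hxdef]; nlinarith
  have hx1 : (1:ℝ) ≤ x := by nlinarith
  have hx0 : (0:ℝ) < x := by linarith
  -- positivity of denominators
  have hpos : ∀ (z : Fin (v-1) → ℝ), (∀ i, 0 ≤ z i) → ∀ i, 0 < x + z i := by
    intro z hz i
    have := hz i
    linarith
  -- expansion
  have expand : ∀ (z : Fin (v-1) → ℝ), (∀ i, 0 ≤ z i) →
      ∑ i, 1 / (x + z i)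
        = ((v-1 : ℕ) : ℝ) / x - (∑ i, z i) / x ^ 2 + (∑ i, (z i) ^ 2) / x ^ 3
          - (∑ i, (z i) ^ 3 / (x + z i)) / x ^ 3 := by
    intro z hz
    have hpt : ∀ i : Fin (v-1), 1 / (x + z i)
        = 1 / x - z i / x ^ 2 + (z i) ^ 2 / x ^ 3 - ((z i) ^ 3 / (x + z i)) / x ^ 3 := by
      intro i
      have h1 : x ≠ 0 := ne_of_gt hx0
      have h2 : x + z i ≠ 0 := ne_of_gt (hpos z hz i)
      field_simp
      ring
    rw [Finset.sum_congr rfl fun i _ => hpt i]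
    rw [Finset.sum_sub_distrib, Finset.sum_add_distrib, Finset.sum_sub_distrib,
      Finset.sum_const, Finset.card_univ, Fintype.card_fin, ← Finset.sum_div,
      ← Finset.sum_div, ← Finset.sum_div]
    push_cast
    ring
  -- sums are equal in degree 1
  have hsum1 : ∑ i, ρ i = ∑ i, ρ' i := by
    rw [← elemSymm_one, ← elemSymm_one, hS1]
  -- squares comparison
  have hsq : ∑ i, (ρ i) ^ 2 ≤ ∑ i, (ρ' i) ^ 2 - 2 := by
    have e1 := elemSymm_two ρ
    have e2 := elemSymm_two ρ'
    rw [hsum1] at e1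
    linarith
  -- remainder bounds
  have hRpos : 0 ≤ ∑ i, (ρ i) ^ 3 / (x + ρ i) := by
    apply Finset.sum_nonneg
    intro i _
    have h := (hρ i).1
    exact div_nonneg (by positivity) (le_of_lt (hpos ρ (fun j => (hρ j).1) i))
  have hR' : ∑ i, (ρ' i) ^ 3 / (x + ρ' i) ≤ ((v-1 : ℕ) : ℝ) * (8 * B ^ 3 / x) := by
    calc ∑ i, (ρ' i) ^ 3 / (x + ρ' i) ≤ ∑ _i : Fin (v-1), 8 * B ^ 3 / x := by
          apply Finset.sum_le_sum
          intro i _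
          have h0 := (hρ' i).1
          have h2 := (hρ' i).2
          apply div_le_div₀ (by positivity) _ hx0 (by linarith)
          calc (ρ' i) ^ 3 ≤ (2*B) ^ 3 := by
                apply pow_le_pow_left₀ h0 h2
          _ = 8 * B ^ 3 := by ring
    _ = ((v-1 : ℕ) : ℝ) * (8 * B ^ 3 / x) := by
          rw [Finset.sum_const, Finset.card_univ, Fintype.card_fin, nsmul_eq_mul]
  have hn : ((v-1 : ℕ) : ℝ) ≤ (v:ℝ) := by
    have : (v-1 : ℕ) ≤ v := by omega
    exact_mod_cast this
  have hsmall : ((v-1 : ℕ) : ℝ) * (8 * B ^ 3 / x) < 2 := by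
    have heq : ((v-1 : ℕ) : ℝ) * (8 * B ^ 3 / x) = ((v-1 : ℕ) : ℝ) * (8 * B ^ 3) / x := by
      ring
    rw [heq, div_lt_iff₀ hx0]
    nlinarith [mul_le_mul_of_nonneg_right hn (by positivity : (0:ℝ) ≤ 8 * B ^ 3)]
  -- final computation
  rw [expand ρ (fun i => (hρ i).1), expand ρ' (fun i => (hρ' i).1), hsum1]
  have hx3 : (0:ℝ) < x ^ 3 := by positivity
  have k1 : (∑ i, (ρ i) ^ 2) / x ^ 3 ≤ (∑ i, (ρ' i) ^ 2) / x ^ 3 - 2 / x ^ 3 := by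
    rw [← sub_div]
    exact (div_le_div_iff_of_pos_right hx3).mpr (by linarith)
  have k2 : 0 ≤ (∑ i, (ρ i) ^ 3 / (x + ρ i)) / x ^ 3 := div_nonneg hRpos hx3.le
  have k3 : (∑ i, (ρ' i) ^ 3 / (x + ρ' i)) / x ^ 3 < 2 / x ^ 3 :=
    (div_lt_div_iff_of_pos_right hx3).mpr (lt_of_le_of_lt hR' hsmall)
  linarith
end

section
/- Let v ≥ 5 and δ ≥ 1 be integers and set m = ⌊(v−2)/2⌋. Let ψ = (ψ_1,…,ψ_{v−1}) and ψ′ = (ψ′_1,…,ψ′_{v−1}) be tuples of real numbers with 0 ≤ ψ_i ≤ 2δ and 0 ≤ ψ′_i ≤ 2δ for all i, such that S_1(ψ) = S_1(ψ′), S_2(ψ) = S_2(ψ′) and S_3(ψ) ≥ S_3(ψ′) + 1. Then for every real x ≥ (2δ)^{v−1}·C(v−1,m)²·(v−3) + 1/v, one has ∑_{i=1}^{v−1} 1/(vx + ψ_i) < ∑_{i=1}^{v−1} 1/(vx + ψ′_i). -/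
lemma elemSymm_eq_eval {n : ℕ} (z : Fin n → ℝ) (k : ℕ) :
    elemSymm z k = MvPolynomial.eval z (MvPolynomial.esymm (Fin n) ℝ k) := by
  simp [elemSymm, MvPolynomial.esymm, MvPolynomial.eval_prod]

lemma psum_eq_eval {n : ℕ} (z : Fin n → ℝ) (k : ℕ) :
    ∑ i, z i ^ k = MvPolynomial.eval z (MvPolynomial.psum (Fin n) ℝ k) := by
  simp [MvPolynomial.psum]

lemma sum_pow_one_eq {n : ℕ} (z : Fin n → ℝ) : ∑ i, z i = elemSymm z 1 := by
  simp [elemSymm, Finset.powersetCard_one, Finset.sum_map]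

lemma sum_sq_eq {n : ℕ} (z : Fin n → ℝ) :
    ∑ i, z i ^ 2 = (elemSymm z 1) ^ 2 - 2 * elemSymm z 2 := by
  have e2 : (Finset.HasAntidiagonal.antidiagonal 2 : Finset (ℕ×ℕ)) = {(0,2),(1,1),(2,0)} := by decide
  have h1 := sum_pow_one_eq z
  have h2 := congrArg (MvPolynomial.eval z)
    (MvPolynomial.psum_eq_mul_esymm_sub_sum (Fin n) ℝ 2 two_pos)
  rw [e2] at h2
  simp [← psum_eq_eval, ← elemSymm_eq_eval, Finset.sum_filter, Finset.sum_insert,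
    Finset.mem_insert, Finset.mem_singleton, Prod.mk.injEq, Prod.ext_iff, ← h1] at h2
  rw [h2, ← h1]; ring

lemma sum_cube_eq {n : ℕ} (z : Fin n → ℝ) :
    ∑ i, z i ^ 3 = (elemSymm z 1) ^ 3 - 3 * elemSymm z 1 * elemSymm z 2 + 3 * elemSymm z 3 := by
  have e3 : (Finset.HasAntidiagonal.antidiagonal 3 : Finset (ℕ×ℕ)) = {(0,3),(1,2),(2,1),(3,0)} := by decide
  have h1 := sum_pow_one_eq z
  have h2 := sum_sq_eq z
  have h3 := congrArg (MvPolynomial.eval z)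
    (MvPolynomial.psum_eq_mul_esymm_sub_sum (Fin n) ℝ 3 three_pos)
  rw [e3] at h3
  simp [← psum_eq_eval, ← elemSymm_eq_eval, Finset.sum_filter, Finset.sum_insert,
    Finset.mem_insert, Finset.mem_singleton, Prod.mk.injEq, Prod.ext_iff, ← h1] at h3
  rw [h3, h2, ← h1]; ring

set_option maxHeartbeats 1000000 in
theorem stmt_12 (v δ : ℕ) (hv : 5 ≤ v) (hδ : 1 ≤ δ) (m : ℕ) (hm : m = (v - 2) / 2)
    (ψ ψ' : Fin (v - 1) → ℝ)
    (hψ : ∀ i, 0 ≤ ψ i ∧ ψ i ≤ 2 * δ) (hψ' : ∀ i, 0 ≤ ψ' i ∧ ψ' i ≤ 2 * δ)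
    (hS1 : elemSymm ψ 1 = elemSymm ψ' 1)
    (hS2 : elemSymm ψ 2 = elemSymm ψ' 2)
    (hS3 : elemSymm ψ' 3 + 1 ≤ elemSymm ψ 3) :
    ∀ x : ℝ, (2 * (δ : ℝ)) ^ (v - 1) * (Nat.choose (v - 1) m : ℝ) ^ 2 * ((v : ℝ) - 3)
        + 1 / (v : ℝ) ≤ x →
      ∑ i, 1 / ((v : ℝ) * x + ψ i) < ∑ i, 1 / ((v : ℝ) * x + ψ' i) := by
  intro x hx
  set r : ℝ := 2 * (δ : ℝ) with hrdef
  have hδ1 : (1:ℝ) ≤ (δ:ℝ) := by exact_mod_cast hδ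
  have hr2 : (2:ℝ) ≤ r := by rw [hrdef]; linarith
  have hr0 : (0:ℝ) < r := by linarith
  have hv5 : (5:ℝ) ≤ (v:ℝ) := by exact_mod_cast hv
  have hcastn : ((v - 1 : ℕ) : ℝ) = (v:ℝ) - 1 := by
    rw [Nat.cast_sub (by omega)]; norm_num
  have hC1 : (1:ℝ) ≤ (Nat.choose (v-1) m : ℝ) := by
    exact_mod_cast Nat.one_le_iff_ne_zero.mpr (Nat.choose_pos (by omega)).ne'
  set C : ℝ := (Nat.choose (v-1) m : ℝ) with hCdef
  set B : ℝ := r ^ (v-1) * C ^ 2 * ((v:ℝ) - 3) with hBdef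
  have hr4n : r ^ 4 ≤ r ^ (v-1) := pow_le_pow_right₀ (by linarith) (by omega)
  have hr4pos : (0:ℝ) < r ^ 4 := by positivity
  have hC2 : (1:ℝ) ≤ C ^ 2 := by nlinarith
  have hrn0 : (0:ℝ) ≤ r ^ (v-1) := by positivity
  have hB : 2 * r ^ 4 ≤ B := by
    have step : r ^ (v-1) * 1 * 2 ≤ r ^ (v-1) * C ^ 2 * ((v:ℝ) - 3) := by
      apply mul_le_mul (mul_le_mul_of_nonneg_left hC2 hrn0) (by linarith) (by norm_num)
      positivity
    rw [hBdef]
    nlinarith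
  set t : ℝ := (v:ℝ) * x with htdef
  have ht1 : (v:ℝ) * B + 1 ≤ t := by
    have hv0 : (v:ℝ) ≠ 0 := by linarith
    have := mul_le_mul_of_nonneg_left hx (by linarith : (0:ℝ) ≤ (v:ℝ))
    calc (v:ℝ) * B + 1 = (v:ℝ) * B + (v:ℝ) * (1/(v:ℝ)) := by
          rw [mul_one_div_cancel hv0]
      _ = (v:ℝ) * (B + 1/(v:ℝ)) := by ring
      _ ≤ (v:ℝ) * x := this
  have ht0 : (0:ℝ) < t := by nlinarith
  have ht1' : (1:ℝ) ≤ t := by nlinarith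
  have hkey : ((v-1:ℕ):ℝ) * r ^ 4 < 3 * t := by
    rw [hcastn]
    nlinarith
  have h4 : (0:ℝ) < t ^ 4 := by positivity
  have h5 : (0:ℝ) < t ^ 5 := by positivity
  -- expansion lemma
  have expand : ∀ z : Fin (v-1) → ℝ, (∀ i, 0 ≤ z i ∧ z i ≤ r) →
      ∑ i, 1 / (t + z i) = ((v-1:ℕ):ℝ) / t - (∑ i, z i) / t ^ 2 + (∑ i, z i ^ 2) / t ^ 3
        - (∑ i, z i ^ 3) / t ^ 4 + ∑ i, z i ^ 4 / (t ^ 4 * (t + z i)) := by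
    intro z hz
    have h : ∀ i ∈ Finset.univ, 1 / (t + z i)
        = 1 / t - z i / t ^ 2 + z i ^ 2 / t ^ 3 - z i ^ 3 / t ^ 4
          + z i ^ 4 / (t ^ 4 * (t + z i)) := by
      intro i _
      have h1 : 0 < t + z i := by have := (hz i).1; linarith
      field_simp
      ring
    rw [Finset.sum_congr rfl h]
    simp only [Finset.sum_add_distrib, Finset.sum_sub_distrib, ← Finset.sum_div,
      Finset.sum_const, Finset.card_univ, Fintype.card_fin, nsmul_eq_mul, mul_one_div, mul_one]
  -- power sum relations
  have e1 : ∑ i, ψ i = ∑ i, ψ' i := by rw [sum_pow_one_eq, sum_pow_one_eq, hS1]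
  have e2 : ∑ i, ψ i ^ 2 = ∑ i, ψ' i ^ 2 := by rw [sum_sq_eq, sum_sq_eq, hS1, hS2]
  have e3 : (∑ i, ψ' i ^ 3) + 3 ≤ ∑ i, ψ i ^ 3 := by
    rw [sum_cube_eq, sum_cube_eq, hS1, hS2]
    linarith
  -- remainder bounds
  have hR : ∑ i, ψ i ^ 4 / (t ^ 4 * (t + ψ i)) ≤ ((v-1:ℕ):ℝ) * r ^ 4 / t ^ 5 := by
    calc ∑ i, ψ i ^ 4 / (t ^ 4 * (t + ψ i)) ≤ ∑ _i : Fin (v-1), r ^ 4 / (t ^ 4 * t) := by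
          apply Finset.sum_le_sum
          intro i _
          obtain ⟨h0, h1⟩ := hψ i
          apply div_le_div₀ (by positivity) (pow_le_pow_left₀ h0 h1 4) (by positivity)
          nlinarith
      _ = ((v-1:ℕ):ℝ) * r ^ 4 / t ^ 5 := by
          rw [Finset.sum_const, Finset.card_univ, Fintype.card_fin, nsmul_eq_mul,
            show t ^ 4 * t = t ^ 5 from by ring, ← mul_div_assoc]
  have hR' : (0:ℝ) ≤ ∑ i, ψ' i ^ 4 / (t ^ 4 * (t + ψ' i)) := by
    apply Finset.sum_nonneg
    intro i _
    have h0 := (hψ' i).1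
    have h1 : 0 < t + ψ' i := by linarith
    positivity
  have key2 : ((v-1:ℕ):ℝ) * r ^ 4 / t ^ 5 < 3 / t ^ 4 := by
    rw [div_lt_div_iff₀ h5 h4]
    calc ((v-1:ℕ):ℝ) * r ^ 4 * t ^ 4 < 3 * t * t ^ 4 := by nlinarith
      _ = 3 * t ^ 5 := by ring
  have e3' : ((∑ i, ψ' i ^ 3) + 3) / t ^ 4 ≤ (∑ i, ψ i ^ 3) / t ^ 4 :=
    (div_le_div_iff_of_pos_right h4).mpr e3
  rw [add_div] at e3'
  rw [expand ψ hψ, expand ψ' hψ', e1, e2]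
  linarith
end

section
/- Let G be a δ-regular simple graph on v vertices (every vertex has degree δ). Then trace( L(G)³ ) = v·δ·(δ+1)² + 2·η(G), where L(G) is the Laplacian matrix of G and η(G) is the number of V-subgraphs of G, i.e. the number of 3-element vertex subsets that induce exactly two edges of G. Equivalently, the sum of cubes of the Laplacian eigenvalues of G equals v·δ·(δ+1)² + 2·η(G). -/
open Finset Matrix SimpleGraph

/-- The number of V-subgraphs of `G`: 3-element vertex subsets carrying exactly two
edges of `G` (counted here as ordered pairs, hence the value `4`). -/
def numVSubgraphs {V : Type*} [Fintype V] [DecidableEq V] (G : SimpleGraph V)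
    [DecidableRel G.Adj] : ℕ :=
  ((Finset.univ.powersetCard 3).filter
    (fun s => ((s ×ˢ s).filter fun p => G.Adj p.1 p.2).card = 4)).card

namespace StmtAux

variable {v : ℕ} (G : SimpleGraph (Fin v)) [DecidableRel G.Adj]

/-- number of ordered adjacent pairs inside a 3-set -/
lemma pairCount (a b c : Fin v) (hab : a ≠ b) (hac : a ≠ c) (hbc : b ≠ c) :
    ((({a,b,c} : Finset (Fin v)) ×ˢ ({a,b,c} : Finset (Fin v))).filter
      (fun p => G.Adj p.1 p.2)).card =
    (if G.Adj a b then 2 else 0) + (if G.Adj a c then 2 else 0) +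
      (if G.Adj b c then 2 else 0) := by
  have hnab : a ∉ ({b,c} : Finset (Fin v)) := by simp [hab, hac]
  have hnbc : b ∉ ({c} : Finset (Fin v)) := by simp [hbc]
  rw [Finset.card_filter, Finset.sum_product]
  have e1 : G.Adj b a ↔ G.Adj a b := G.adj_comm b a
  have e2 : G.Adj c a ↔ G.Adj a c := G.adj_comm c a
  have e3 : G.Adj c b ↔ G.Adj b c := G.adj_comm c b
  simp only [Finset.sum_insert hnab, Finset.sum_insert hnbc, Finset.sum_singleton,
    e1, e2, e3, G.irrefl, if_false]
  split_ifs <;> omega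

/-- the cherries (ordered V-subgraphs rooted at the center) -/
def Cherry : Finset (Fin v × Fin v × Fin v) :=
  Finset.univ.filter fun t =>
    G.Adj t.1 t.2.1 ∧ G.Adj t.1 t.2.2 ∧ ¬ G.Adj t.2.1 t.2.2 ∧ t.2.1 ≠ t.2.2

lemma fiber_eq (a b c : Fin v) (h1 : G.Adj a b) (h2 : G.Adj a c)
    (h3 : ¬ G.Adj b c) (hbc : b ≠ c) :
    (Cherry G).filter (fun t => ({t.1, t.2.1, t.2.2} : Finset (Fin v)) = {a,b,c}) =
      {(a,b,c), (a,c,b)} := by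
  have h3' : ¬ G.Adj c b := fun h => h3 h.symm
  ext ⟨i, j, k⟩
  simp only [Cherry, Finset.mem_filter, Finset.mem_univ, true_and, Finset.mem_insert,
    Finset.mem_singleton, Prod.mk.injEq]
  constructor
  · rintro ⟨⟨hij, hik, hjk, hne⟩, hset⟩
    have hi : i ∈ ({a,b,c} : Finset (Fin v)) := by
      rw [← hset]; simp
    have hj : j ∈ ({a,b,c} : Finset (Fin v)) := by
      rw [← hset]; simp
    have hk : k ∈ ({a,b,c} : Finset (Fin v)) := by
      rw [← hset]; simp
    have hij' : i ≠ j := G.ne_of_adj hij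
    have hik' : i ≠ k := G.ne_of_adj hik
    simp only [Finset.mem_insert, Finset.mem_singleton] at hi hj hk
    rcases hi with rfl | rfl | rfl <;> rcases hj with rfl | rfl | rfl <;>
      rcases hk with rfl | rfl | rfl <;> simp_all
  · have hset1 : ({a,b,c} : Finset (Fin v)) = {a,b,c} := rfl
    have hset2 : ({a,c,b} : Finset (Fin v)) = {a,b,c} := by
      ext x; simp; tauto
    rintro (⟨rfl, rfl, rfl⟩ | ⟨rfl, rfl, rfl⟩) <;>
      simp_all [hbc, hbc.symm]

lemma cherry_card_eq : (Cherry G).card = 2 * numVSubgraphs G := by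
  classical
  set S := ((Finset.univ.powersetCard 3).filter
    (fun s : Finset (Fin v) => ((s ×ˢ s).filter fun p => G.Adj p.1 p.2).card = 4)) with hS
  have hmap : ∀ t ∈ Cherry G, ({t.1, t.2.1, t.2.2} : Finset (Fin v)) ∈ S := by
    rintro ⟨i, j, k⟩ ht
    simp only [Cherry, Finset.mem_filter, Finset.mem_univ, true_and] at ht
    obtain ⟨hij, hik, hjk, hne⟩ := ht
    have hij' : i ≠ j := G.ne_of_adj hij
    have hik' : i ≠ k := G.ne_of_adj hik
    simp only [hS, Finset.mem_filter, Finset.mem_powersetCard_univ]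
    constructor
    · rw [Finset.card_insert_of_notMem (by simp [hij', hik']),
        Finset.card_insert_of_notMem (by simp [hne]), Finset.card_singleton]
    · rw [pairCount G i j k hij' hik' hne]
      simp [hij, hik, hjk]
  rw [Finset.card_eq_sum_card_fiberwise hmap]
  have hfib : ∀ s ∈ S,
      ((Cherry G).filter (fun t => ({t.1, t.2.1, t.2.2} : Finset (Fin v)) = s)).card = 2 := by
    intro s hs
    simp only [hS, Finset.mem_filter, Finset.mem_powersetCard_univ] at hs
    obtain ⟨hcard, h4⟩ := hs
    obtain ⟨a, b, c, hab, hac, hbc, rfl⟩ := Finset.card_eq_three.mp hcard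
    rw [pairCount G a b c hab hac hbc] at h4
    have key : ∀ x y z : Fin v, G.Adj x y → G.Adj x z → ¬ G.Adj y z → y ≠ z →
        ({a,b,c} : Finset (Fin v)) = {x,y,z} →
        ((Cherry G).filter
          (fun t => ({t.1, t.2.1, t.2.2} : Finset (Fin v)) = {a,b,c})).card = 2 := by
      intro x y z e1 e2 e3 eyz hset
      rw [hset, fiber_eq G x y z e1 e2 e3 eyz]
      rw [Finset.card_insert_of_notMem (by simp [eyz]), Finset.card_singleton]
    split_ifs at h4 with q1 q2 q3 q3 q2 q3 q3 <;> try omega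
    · -- Adj a b, Adj a c, ¬ Adj b c : center a
      exact key a b c q1 q2 q3 hbc rfl
    · -- Adj a b, ¬ Adj a c, Adj b c : center b
      refine key b a c q1.symm q3 q2 hac ?_
      ext x; simp; tauto
    · -- ¬ Adj a b, Adj a c, Adj b c : center c
      refine key c a b q2.symm q3.symm q1 hab ?_
      ext x; simp; tauto
  rw [Finset.sum_congr rfl hfib, Finset.sum_const, smul_eq_mul, mul_comm]
  rfl


lemma lap_eq {δ : ℕ} (hreg : G.IsRegularOfDegree δ) :
    G.lapMatrix ℝ = (δ : ℝ) • 1 - G.adjMatrix ℝ := by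
  unfold lapMatrix degMatrix
  congr 1
  ext i j
  simp only [Matrix.diagonal, Matrix.smul_apply, Matrix.one_apply, Matrix.of_apply, hreg i]
  split <;> simp

lemma expand_cube (c : ℝ) (A : Matrix (Fin v) (Fin v) ℝ) :
    (c • 1 - A)^3 = c^3 • 1 - (3*c^2) • A + (3*c) • (A*A) - A*A*A := by
  simp only [pow_succ, pow_zero, one_mul, sub_mul, mul_sub, smul_mul_assoc,
    mul_smul_comm, mul_one, smul_smul]
  module

lemma trace_sq {δ : ℕ} (hreg : G.IsRegularOfDegree δ) :
    Matrix.trace (G.adjMatrix ℝ * G.adjMatrix ℝ) = v * δ := by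
  rw [Matrix.trace]
  simp only [Matrix.diag_apply, adjMatrix_mul_self_apply_self]
  simp only [hreg _]
  simp [mul_comm]

lemma trace_cube :
    Matrix.trace (G.adjMatrix ℝ * G.adjMatrix ℝ * G.adjMatrix ℝ) =
      ((((Finset.univ : Finset (Fin v × Fin v × Fin v)).filter
        (fun t => G.Adj t.1 t.2.1 ∧ G.Adj t.2.1 t.2.2 ∧ G.Adj t.2.2 t.1)).card : ℕ) : ℝ) := by
  rw [Matrix.trace, Finset.card_filter]
  push_cast
  simp only [Fintype.sum_prod_type]
  simp only [Matrix.diag_apply, Matrix.mul_apply, Finset.sum_mul, adjMatrix_apply,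
    ite_mul, mul_ite, one_mul, mul_one, zero_mul, mul_zero, ite_and]
  refine Finset.sum_congr rfl fun i _ => Finset.sum_congr rfl fun j _ => ?_
  have e1 : G.Adj j i ↔ G.Adj i j := G.adj_comm j i
  simp only [e1]
  by_cases h : G.Adj i j
  · simp only [h, if_true]
    refine Finset.sum_congr rfl fun k _ => ?_
    have e2 : G.Adj k j ↔ G.Adj j k := G.adj_comm k j
    have e3 : G.Adj i k ↔ G.Adj k i := G.adj_comm i k
    simp only [e2, e3]
  · simp [h]

lemma counting {δ : ℕ} (hreg : G.IsRegularOfDegree δ) :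
    ((v:ℝ)) * δ * δ =
      (v:ℝ) * δ +
      (((Finset.univ : Finset (Fin v × Fin v × Fin v)).filter
        (fun t => G.Adj t.1 t.2.1 ∧ G.Adj t.2.1 t.2.2 ∧ G.Adj t.2.2 t.1)).card : ℝ) +
      (((Finset.univ : Finset (Fin v × Fin v × Fin v)).filter
        (fun t => G.Adj t.1 t.2.1 ∧ G.Adj t.1 t.2.2 ∧ ¬ G.Adj t.2.1 t.2.2 ∧ t.2.1 ≠ t.2.2)).card : ℝ) := by
  have hrow : ∀ i : Fin v, ∑ j, (if G.Adj i j then (1:ℝ) else 0) = δ := by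
    intro i
    rw [Finset.sum_boole, ← neighborFinset_eq_filter]
    exact_mod_cast hreg i
  have hpt : ∀ i j k : Fin v,
      (if G.Adj i j then (1:ℝ) else 0) * (if G.Adj i k then (1:ℝ) else 0) =
        (if j = k then (if G.Adj i j then (1:ℝ) else 0) else 0) +
        (if G.Adj i j ∧ G.Adj j k ∧ G.Adj k i then (1:ℝ) else 0) +
        (if G.Adj i j ∧ G.Adj i k ∧ ¬ G.Adj j k ∧ j ≠ k then (1:ℝ) else 0) := by
    intro i j k
    have e : G.Adj k i ↔ G.Adj i k := G.adj_comm k i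
    by_cases h4 : j = k
    · subst h4
      by_cases h1 : G.Adj i j <;> simp [h1, G.irrefl]
    · by_cases h3 : G.Adj j k <;>
        by_cases h1 : G.Adj i j <;> by_cases h2 : G.Adj i k <;>
        simp [h1, h2, h3, h4, e]
  have lhs_eq : ∑ i : Fin v, ∑ j : Fin v, ∑ k : Fin v,
      (if G.Adj i j then (1:ℝ) else 0) * (if G.Adj i k then (1:ℝ) else 0)
      = (v:ℝ) * δ * δ := by
    have : ∀ i : Fin v, ∑ j : Fin v, ∑ k : Fin v,
        (if G.Adj i j then (1:ℝ) else 0) * (if G.Adj i k then (1:ℝ) else 0) = (δ:ℝ) * δ := by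
      intro i
      rw [← Finset.sum_mul_sum, hrow i]
    rw [Finset.sum_congr rfl fun i _ => this i, Finset.sum_const]
    simp [mul_assoc]
  have hdiag : ∑ i : Fin v, ∑ j : Fin v, ∑ k : Fin v,
      (if j = k then (if G.Adj i j then (1:ℝ) else 0) else 0) = (v:ℝ) * δ := by
    simp only [Finset.sum_ite_eq, Finset.mem_univ, if_true]
    simp only [hrow]
    rw [Finset.sum_const]
    simp [mul_comm]
  have htri : ∑ i : Fin v, ∑ j : Fin v, ∑ k : Fin v,
      (if G.Adj i j ∧ G.Adj j k ∧ G.Adj k i then (1:ℝ) else 0) =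
      (((Finset.univ : Finset (Fin v × Fin v × Fin v)).filter
        (fun t => G.Adj t.1 t.2.1 ∧ G.Adj t.2.1 t.2.2 ∧ G.Adj t.2.2 t.1)).card : ℝ) := by
    rw [Finset.card_filter]
    push_cast
    simp only [Fintype.sum_prod_type]
  have hch : ∑ i : Fin v, ∑ j : Fin v, ∑ k : Fin v,
      (if G.Adj i j ∧ G.Adj i k ∧ ¬ G.Adj j k ∧ j ≠ k then (1:ℝ) else 0) =
      (((Finset.univ : Finset (Fin v × Fin v × Fin v)).filter
        (fun t => G.Adj t.1 t.2.1 ∧ G.Adj t.1 t.2.2 ∧ ¬ G.Adj t.2.1 t.2.2 ∧ t.2.1 ≠ t.2.2)).card : ℝ) := by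
    rw [Finset.card_filter]
    push_cast
    simp only [Fintype.sum_prod_type]
  rw [← lhs_eq, ← hdiag, ← htri, ← hch]
  simp only [hpt]
  simp only [Finset.sum_add_distrib]

end StmtAux

theorem stmt_15 (v δ : ℕ) (G : SimpleGraph (Fin v)) [DecidableRel G.Adj]
    (hreg : G.IsRegularOfDegree δ) :
    Matrix.trace (G.lapMatrix ℝ ^ 3) =
      (v : ℝ) * δ * (δ + 1) ^ 2 + 2 * numVSubgraphs G := by

  classical
  have hL := StmtAux.lap_eq G hreg
  have hW := StmtAux.counting G hreg
  have hC := StmtAux.cherry_card_eq G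
  rw [hL, StmtAux.expand_cube]
  rw [Matrix.trace_sub, Matrix.trace_add, Matrix.trace_sub, Matrix.trace_smul,
    Matrix.trace_smul, Matrix.trace_smul, Matrix.trace_one, SimpleGraph.trace_adjMatrix,
    StmtAux.trace_sq G hreg, StmtAux.trace_cube G]
  have hCr : ((StmtAux.Cherry G).card : ℝ) = 2 * numVSubgraphs G := by
    rw [hC]; push_cast; ring
  rw [show (((Finset.univ : Finset (Fin v × Fin v × Fin v)).filter
        (fun t => G.Adj t.1 t.2.1 ∧ G.Adj t.1 t.2.2 ∧ ¬ G.Adj t.2.1 t.2.2 ∧ t.2.1 ≠ t.2.2)).card : ℝ)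
      = 2 * numVSubgraphs G from hCr] at hW
  simp only [Fintype.card_fin, smul_eq_mul]
  nlinarith [hW]
end

section
/- Let v ≥ 3 and let G and G′ be δ-regular simple graphs on v vertices. Then S_3(ψ^G) − S_3(ψ^{G′}) = (2/3)·( η(G) − η(G′) ), where ψ^G denotes the tuple of the v−1 nontrivial Laplacian eigenvalues of G and η(G) is the number of V-subgraphs of G. Equivalently, in terms of characteristic polynomials: 3·( coeff_{X^{v−3}} charpoly(L(G′)) − coeff_{X^{v−3}} charpoly(L(G)) ) = 2·( η(G) − η(G′) ), since charpoly(L(G)) = X·∏_{i=1}^{v−1}(X − ψ_i^G) has coefficient of X^{v−3} equal to −S_3(ψ^G). -/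
open Finset Polynomial Matrix

section Newton
variable {ι : Type*} [DecidableEq ι]

lemma eS_insert (μ : ι → ℝ) (k : ℕ) {a : ι} {s : Finset ι} (ha : a ∉ s) :
    ∑ t ∈ (insert a s).powersetCard (k+1), ∏ i ∈ t, μ i
      = (∑ t ∈ s.powersetCard (k+1), ∏ i ∈ t, μ i)
        + μ a * ∑ t ∈ s.powersetCard k, ∏ i ∈ t, μ i := by
  rw [Finset.powersetCard_succ_insert ha, Finset.sum_union, Finset.sum_image]
  · rw [Finset.mul_sum]
    congr 1
    refine Finset.sum_congr rfl fun t ht => ?_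
    rw [Finset.mem_powersetCard] at ht
    rw [Finset.prod_insert (fun h => ha (ht.1 h))]
  · intro t1 h1 t2 h2 h
    rw [Finset.mem_coe, Finset.mem_powersetCard] at h1 h2
    have ha1 : a ∉ t1 := fun h' => ha (h1.1 h')
    have ha2 : a ∉ t2 := fun h' => ha (h2.1 h')
    rw [← Finset.erase_insert ha1, ← Finset.erase_insert ha2, h]
  · rw [Finset.disjoint_right]
    rintro t ht hts
    simp only [Finset.mem_image] at ht
    obtain ⟨u, hu, rfl⟩ := ht
    rw [Finset.mem_powersetCard] at hts
    exact ha (hts.1 (Finset.mem_insert_self a u))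

lemma newton3 (μ : ι → ℝ) (s : Finset ι) :
    (∑ t ∈ s.powersetCard 0, ∏ i ∈ t, μ i) = 1 ∧
    (∑ t ∈ s.powersetCard 1, ∏ i ∈ t, μ i) = ∑ i ∈ s, μ i ∧
    (∑ i ∈ s, μ i)^2 = 2 * (∑ t ∈ s.powersetCard 2, ∏ i ∈ t, μ i) + ∑ i ∈ s, (μ i)^2 ∧
    (∑ i ∈ s, μ i)^3 = 6 * (∑ t ∈ s.powersetCard 3, ∏ i ∈ t, μ i)
        + 3 * (∑ i ∈ s, μ i) * (∑ i ∈ s, (μ i)^2) - 2 * ∑ i ∈ s, (μ i)^3 := by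
  induction s using Finset.induction_on with
  | empty =>
    refine ⟨by simp, ?_, ?_, ?_⟩ <;>
      · rw [Finset.powersetCard_eq_empty.2 (by simp)]; simp
  | insert _ _ ha =>
    rename_i a s ih
    obtain ⟨h0, h1, h2, h3⟩ := ih
    have e1 := eS_insert μ 0 ha
    have e2 := eS_insert μ 1 ha
    have e3 := eS_insert μ 2 ha
    norm_num at e1 e2 e3
    rw [e1, e2, e3, Finset.sum_insert ha, Finset.sum_insert ha, Finset.sum_insert ha]
    refine ⟨by simp, ?_, ?_, ?_⟩
    · rw [h1]; ring
    · rw [h1]; linear_combination h2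
    · linear_combination h3 + 3 * μ a * h2
end Newton

section Spectral
variable {n : Type*} [Fintype n] [DecidableEq n]

lemma charpoly_conj_unitary (U : Matrix.unitaryGroup n ℝ) (A : Matrix n n ℝ) :
    (star (U : Matrix n n ℝ) * A * (U : Matrix n n ℝ)).charpoly = A.charpoly := by
  have hsU : star (U : Matrix n n ℝ) * (U : Matrix n n ℝ) = 1 :=
    Matrix.UnitaryGroup.star_mul_self U
  have hmap : ((star (U : Matrix n n ℝ)).map C) * ((U : Matrix n n ℝ).map C) = 1 := by
    rw [← Matrix.map_mul, hsU]
    simp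
  have hcm : charmatrix (star (U : Matrix n n ℝ) * A * (U : Matrix n n ℝ)) =
      ((star (U : Matrix n n ℝ)).map C) * charmatrix A * ((U : Matrix n n ℝ).map C) := by
    unfold charmatrix
    rw [Matrix.mul_sub, Matrix.sub_mul]
    congr 1
    · rw [← (Matrix.scalar_commute (X : ℝ[X]) (fun r => Commute.all _ _)
          ((star (U : Matrix n n ℝ)).map C)).eq, Matrix.mul_assoc, hmap, Matrix.mul_one]
    · simp only [RingHom.mapMatrix_apply]
      rw [← Matrix.map_mul, ← Matrix.map_mul]
  unfold Matrix.charpoly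
  rw [hcm, Matrix.det_mul, Matrix.det_mul, mul_comm, ← mul_assoc, mul_comm (((U : Matrix n n ℝ)).map C).det,
    ← Matrix.det_mul, hmap, Matrix.det_one, one_mul]

lemma charpoly_hermitian_eq_prod {A : Matrix n n ℝ} (hA : A.IsHermitian) :
    A.charpoly = ∏ i, (X - C (hA.eigenvalues i)) := by
  have h := hA.conjStarAlgAut_star_eigenvectorUnitary
  rw [Unitary.conjStarAlgAut_star_apply] at h
  have h2 : (RCLike.ofReal ∘ hA.eigenvalues : n → ℝ) = hA.eigenvalues := by
    ext i; simp [RCLike.ofReal]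
  rw [← charpoly_conj_unitary (IsHermitian.eigenvectorUnitary hA) A, h, h2]
  have hcm : charmatrix (Matrix.diagonal hA.eigenvalues) =
      Matrix.diagonal (fun i => (X : ℝ[X]) - C (hA.eigenvalues i)) := by
    ext i j
    by_cases hij : i = j
    · subst hij; simp [charmatrix_apply_eq]
    · simp [charmatrix_apply_ne _ _ _ hij, Matrix.diagonal_apply_ne _ hij]
  rw [Matrix.charpoly, hcm, Matrix.det_diagonal]

lemma trace_pow_hermitian {A : Matrix n n ℝ} (hA : A.IsHermitian) (k : ℕ) :
    Matrix.trace (A ^ k) = ∑ i, (hA.eigenvalues i) ^ k := by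
  have h2 : (RCLike.ofReal ∘ hA.eigenvalues : n → ℝ) = hA.eigenvalues := by
    ext i; simp [RCLike.ofReal]
  have hspec := hA.spectral_theorem
  rw [h2, Unitary.conjStarAlgAut_apply] at hspec
  set U : Matrix n n ℝ := (IsHermitian.eigenvectorUnitary hA : Matrix n n ℝ) with hUdef
  have hsU : star U * U = 1 := Matrix.UnitaryGroup.star_mul_self _
  have hcancel : ∀ X : Matrix n n ℝ, star U * (U * X) = X := by
    intro X; rw [← Matrix.mul_assoc, hsU, Matrix.one_mul]
  have key : ∀ m : ℕ, A ^ m = U * (Matrix.diagonal hA.eigenvalues) ^ m * star U := by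
    intro m
    induction m with
    | zero =>
      simp only [pow_zero, Matrix.mul_one]
      exact (Matrix.mem_unitaryGroup_iff.mp (IsHermitian.eigenvectorUnitary hA).2).symm
    | succ m ih =>
      have h4 := congrArg
        (fun M => U * Matrix.diagonal hA.eigenvalues ^ m * star U * M) hspec
      rw [pow_succ A m, ih]
      refine h4.trans ?_
      simp only [pow_succ, Matrix.mul_assoc, hcancel]
  rw [key k, Matrix.trace_mul_cycle, hsU, Matrix.one_mul, Matrix.diagonal_pow,
    Matrix.trace_diagonal]
  simp
end Spectral

section Comb
variable {V : Type*} [Fintype V] [DecidableEq V] (G : SimpleGraph V) [DecidableRel G.Adj]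

private def aN (G : SimpleGraph V) [DecidableRel G.Adj] (x y : V) : ℕ :=
  if G.Adj x y then 1 else 0

private def bN (G : SimpleGraph V) [DecidableRel G.Adj] (x y : V) : ℕ :=
  if G.Adj x y then 0 else 1

/-- per 3-set evaluation -/
lemma inner_eval (s : Finset V) (hs : s.card = 3) :
    ∑ p ∈ ((s ×ˢ s ×ˢ s).filter
        (fun p : V × V × V => p.1 ≠ p.2.1 ∧ p.2.1 ≠ p.2.2 ∧ p.1 ≠ p.2.2)),
      aN G p.1 p.2.1 * aN G p.2.1 p.2.2 * bN G p.2.2 p.1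
    = if ((s ×ˢ s).filter fun p => G.Adj p.1 p.2).card = 4 then 2 else 0 := by
  obtain ⟨x, y, z, hxy, hxz, hyz, rfl⟩ := Finset.card_eq_three.mp hs
  rw [Finset.sum_filter, Finset.card_filter]
  simp only [Finset.sum_product, Finset.sum_insert, Finset.sum_singleton,
    Finset.mem_insert, Finset.mem_singleton, hxy, hxz, hyz, aN, bN]
  by_cases e1 : G.Adj x y <;> by_cases e2 : G.Adj x z <;> by_cases e3 : G.Adj y z <;>
    simp [e1, e2, e3, G.adj_comm y x, G.adj_comm z x, G.adj_comm z y, hxy, hxz, hyz,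
      hxy.symm, hxz.symm, hyz.symm, SimpleGraph.irrefl, Finset.filter_insert,
      Finset.filter_singleton, Finset.card_insert_of_notMem, Finset.mem_insert,
      Finset.mem_singleton] <;> norm_num

lemma card_triple {x y z : V} (h1 : x ≠ y) (h2 : y ≠ z) (h3 : x ≠ z) :
    ({x, y, z} : Finset V).card = 3 := by
  rw [Finset.card_insert_of_notMem (by simp [h1, h3]),
    Finset.card_insert_of_notMem (by simp [h2]), Finset.card_singleton]

lemma comb_main :
    ∑ p : V × V × V, aN G p.1 p.2.1 * aN G p.2.1 p.2.2 * bN G p.2.2 p.1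
      = 2 * numVSubgraphs G + ∑ x : V, ∑ y : V, aN G x y := by
  classical
  set t : V × V × V → ℕ :=
    fun p => aN G p.1 p.2.1 * aN G p.2.1 p.2.2 * bN G p.2.2 p.1 with ht
  -- split into p.1 ≠ p.2.2 and p.1 = p.2.2
  rw [← Finset.sum_filter_add_sum_filter_not Finset.univ
    (fun p : V × V × V => p.1 ≠ p.2.2) t]
  have hdiag : ∑ p ∈ Finset.univ.filter (fun p : V × V × V => ¬p.1 ≠ p.2.2), t p
      = ∑ x : V, ∑ y : V, aN G x y := by
    rw [← Finset.sum_product']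
    refine Finset.sum_nbij' (fun p => (p.1, p.2.1)) (fun q => (q.1, q.2, q.1)) ?_ ?_ ?_ ?_ ?_
    · intro p hp; simp
    · intro q hq; simp
    · intro p hp
      simp only [Finset.mem_filter, not_not] at hp
      ext <;> simp [hp.2.symm]
    · intro q hq; rfl
    · intro p hp
      simp only [Finset.mem_filter, not_not] at hp
      obtain ⟨-, hp2⟩ := hp
      simp only [ht, ← hp2]
      by_cases h : G.Adj p.1 p.2.1
      · have h' : G.Adj p.2.1 p.1 := h.symm
        simp [aN, bN, h, h', G.irrefl]
      · simp [aN, h]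
  rw [hdiag]
  congr 1
  -- restrict to fully distinct triples
  have hstep : ∑ p ∈ Finset.univ.filter (fun p : V × V × V => p.1 ≠ p.2.2), t p
      = ∑ p ∈ Finset.univ.filter
          (fun p : V × V × V => p.1 ≠ p.2.1 ∧ p.2.1 ≠ p.2.2 ∧ p.1 ≠ p.2.2), t p := by
    refine (Finset.sum_subset ?_ ?_).symm
    · intro p hp
      simp only [Finset.mem_filter] at hp ⊢
      exact ⟨hp.1, hp.2.2.2⟩
    · intro p hp hnp
      simp only [Finset.mem_filter, Finset.mem_univ, true_and, not_and] at hp hnp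
      by_cases h1 : p.1 = p.2.1
      · simp [ht, aN, ← h1, G.irrefl]
      · by_cases h2 : p.2.1 = p.2.2
        · simp [ht, aN, ← h2, G.irrefl]
        · exact absurd hp (hnp h1 h2)
  rw [hstep]
  -- group by underlying 3-element set
  rw [← Finset.sum_fiberwise_of_maps_to
    (g := fun p : V × V × V => ({p.1, p.2.1, p.2.2} : Finset V))
    (t := Finset.univ.powersetCard 3) ?hmaps t]
  case hmaps =>
    intro p hp
    simp only [Finset.mem_filter] at hp
    rw [Finset.mem_powersetCard_univ]
    exact card_triple hp.2.1 hp.2.2.1 hp.2.2.2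
  -- rewrite numVSubgraphs as a sum
  rw [numVSubgraphs, Finset.card_filter, Finset.mul_sum]
  refine Finset.sum_congr rfl fun s hs => ?_
  rw [Finset.mem_powersetCard_univ] at hs
  have hfiber : (Finset.univ.filter
        (fun p : V × V × V => p.1 ≠ p.2.1 ∧ p.2.1 ≠ p.2.2 ∧ p.1 ≠ p.2.2)).filter
        (fun p => ({p.1, p.2.1, p.2.2} : Finset V) = s)
      = (s ×ˢ s ×ˢ s).filter
        (fun p : V × V × V => p.1 ≠ p.2.1 ∧ p.2.1 ≠ p.2.2 ∧ p.1 ≠ p.2.2) := by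
    ext p
    simp only [Finset.mem_filter, Finset.mem_univ, true_and, Finset.mem_product]
    constructor
    · rintro ⟨⟨h1, h2, h3⟩, hset⟩
      refine ⟨⟨?_, ?_, ?_⟩, h1, h2, h3⟩ <;> rw [← hset] <;> simp
    · rintro ⟨⟨m1, m2, m3⟩, h1, h2, h3⟩
      refine ⟨⟨h1, h2, h3⟩, ?_⟩
      apply Finset.eq_of_subset_of_card_le
      · intro w hw
        simp only [Finset.mem_insert, Finset.mem_singleton] at hw
        rcases hw with rfl | rfl | rfl <;> assumption
      · rw [hs, card_triple h1 h2 h3]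
  rw [hfiber, inner_eval G s hs]
  split <;> simp

private def WN (G : SimpleGraph V) [DecidableRel G.Adj] : ℕ :=
  ∑ p : V × V × V, aN G p.1 p.2.1 * aN G p.2.1 p.2.2 * aN G p.2.2 p.1

lemma sum_row {δ : ℕ} (hreg : G.IsRegularOfDegree δ) (x : V) :
    ∑ y : V, aN G x y = δ := by
  have : ∑ y : V, aN G x y = (Finset.univ.filter (G.Adj x)).card :=
    (Finset.card_filter _ _).symm
  rw [this, ← SimpleGraph.neighborFinset_eq_filter, ← SimpleGraph.degree, hreg x]

lemma WN_eq {δ : ℕ} (hreg : G.IsRegularOfDegree δ) :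
    WN G + 2 * numVSubgraphs G + Fintype.card V * δ
      = Fintype.card V * δ * δ := by
  have hsplit : ∑ p : V × V × V, aN G p.1 p.2.1 * aN G p.2.1 p.2.2
      = WN G + ∑ p : V × V × V, aN G p.1 p.2.1 * aN G p.2.1 p.2.2 * bN G p.2.2 p.1 := by
    rw [WN, ← Finset.sum_add_distrib]
    refine Finset.sum_congr rfl fun p _ => ?_
    have : aN G p.2.2 p.1 + bN G p.2.2 p.1 = 1 := by
      unfold aN bN; split <;> simp
    calc aN G p.1 p.2.1 * aN G p.2.1 p.2.2
        = aN G p.1 p.2.1 * aN G p.2.1 p.2.2 * (aN G p.2.2 p.1 + bN G p.2.2 p.1) := by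
          rw [this, mul_one]
      _ = _ := by ring
  have hrow : ∀ x : V, ∑ y : V, aN G x y = δ := sum_row G hreg
  have htot : ∑ p : V × V × V, aN G p.1 p.2.1 * aN G p.2.1 p.2.2
      = Fintype.card V * δ * δ := by
    rw [Fintype.sum_prod_type]
    simp only [Fintype.sum_prod_type]
    have : ∀ x y : V, ∑ z : V, aN G x y * aN G y z = aN G x y * δ := by
      intro x y; rw [← Finset.mul_sum, hrow y]
    simp only [this]
    simp only [← Finset.sum_mul, hrow]
    simp [Finset.sum_const, Finset.card_univ, mul_assoc]
  have hpair : ∑ x : V, ∑ y : V, aN G x y = Fintype.card V * δ := by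
    simp only [hrow, Finset.sum_const, Finset.card_univ, smul_eq_mul]
  rw [← htot, hsplit, comb_main, hpair]
  ring

lemma trace_cube_adj :
    Matrix.trace (G.adjMatrix ℝ * G.adjMatrix ℝ * G.adjMatrix ℝ) = (WN G : ℝ) := by
  unfold WN
  push_cast
  rw [Matrix.trace, Fintype.sum_prod_type]
  refine Finset.sum_congr rfl fun x _ => ?_
  simp only [Fintype.sum_prod_type, Matrix.diag_apply, Matrix.mul_apply, Finset.sum_mul]
  rw [Finset.sum_comm]
  refine Finset.sum_congr rfl fun y _ => ?_
  refine Finset.sum_congr rfl fun z _ => ?_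
  simp [aN]

section Traces
variable {v δ : ℕ} (G' : SimpleGraph (Fin v)) [DecidableRel G'.Adj]

lemma lap_eq (hreg : G'.IsRegularOfDegree δ) :
    G'.lapMatrix ℝ = (δ : ℝ) • (1 : Matrix (Fin v) (Fin v) ℝ) - G'.adjMatrix ℝ := by
  unfold SimpleGraph.lapMatrix
  congr 1
  ext i j
  by_cases h : i = j
  · subst h; simp [SimpleGraph.degMatrix, hreg i, Matrix.one_apply]
  · simp [SimpleGraph.degMatrix, Matrix.diagonal_apply_ne _ h, Matrix.one_apply_ne h]

lemma trace_lap_pows (hreg : G'.IsRegularOfDegree δ) :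
    Matrix.trace (G'.lapMatrix ℝ ^ 1) = (v : ℝ) * δ ∧
    Matrix.trace (G'.lapMatrix ℝ ^ 2) = (v : ℝ) * (δ:ℝ)^2 + (v : ℝ) * δ ∧
    Matrix.trace (G'.lapMatrix ℝ ^ 3)
      = v * (δ:ℝ)^3 + 2 * v * δ^2 + v * δ + 2 * (numVSubgraphs G' : ℝ) := by
  set A := G'.adjMatrix ℝ with hA
  set L := G'.lapMatrix ℝ with hLdef
  set c : ℝ := (δ : ℝ) with hc
  have hL : L = c • 1 - A := lap_eq G' hreg
  have hWcast : (WN G' : ℝ) = v * δ^2 - v * δ - 2 * (numVSubgraphs G' : ℝ) := by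
    have h := WN_eq G' hreg
    have := congrArg (fun k : ℕ => (k : ℝ)) h
    push_cast at this
    simp only [Fintype.card_fin] at this
    linear_combination this
  have trA : Matrix.trace A = 0 := by simp [hA]
  have trA2 : Matrix.trace (A * A) = v * δ := by
    rw [Matrix.trace]
    have : ∀ i, (A * A).diag i = (δ : ℝ) := by
      intro i
      rw [Matrix.diag_apply, hA, SimpleGraph.adjMatrix_mul_self_apply_self, hreg i]
    simp only [this]
    simp [Finset.card_univ]
  have trA3 : Matrix.trace (A * A * A)
      = v * δ^2 - v * δ - 2 * (numVSubgraphs G' : ℝ) := by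
    rw [trace_cube_adj, hWcast]
  have key : ∀ M : Matrix (Fin v) (Fin v) ℝ, M * L = c • M - M * A := by
    intro M
    rw [hL, Matrix.mul_sub, Matrix.mul_smul, Matrix.mul_one]
  have hLA : L * A = c • A - A * A := by
    rw [hL, Matrix.sub_mul, Matrix.smul_mul, Matrix.one_mul]
  have trL : Matrix.trace L = v * δ := by
    rw [hL, Matrix.trace_sub, Matrix.trace_smul, Matrix.trace_one, trA]
    simp only [Fintype.card_fin, hc, smul_eq_mul]
    push_cast
    ring
  have trLA : Matrix.trace (L * A) = -(v * δ) := by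
    rw [hLA, Matrix.trace_sub, Matrix.trace_smul, trA, trA2]
    simp
  have trL2 : Matrix.trace (L ^ 2) = (v:ℝ) * (δ:ℝ)^2 + v * δ := by
    rw [pow_two, key L, Matrix.trace_sub, Matrix.trace_smul, trL, trLA, hc]
    simp only [smul_eq_mul]
    ring
  have trL3 : Matrix.trace (L ^ 3)
      = v * (δ:ℝ)^3 + 2 * v * δ^2 + v * δ + 2 * (numVSubgraphs G' : ℝ) := by
    have h1 : L ^ 3 = c • (L ^ 2) - L ^ 2 * A := by
      rw [pow_succ, key (L ^ 2)]
    have h2 : L ^ 2 * A = c • (L * A) - (L * A) * A := by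
      rw [pow_two, key L, Matrix.sub_mul, Matrix.smul_mul]
    have h3 : (L * A) * A = c • (A * A) - A * A * A := by
      rw [hLA, Matrix.sub_mul, Matrix.smul_mul]
    rw [h1, Matrix.trace_sub, Matrix.trace_smul, h2, Matrix.trace_sub, Matrix.trace_smul,
      h3, Matrix.trace_sub, Matrix.trace_smul, trL2, trLA, trA2, trA3, hc]
    simp only [smul_eq_mul]
    ring
  exact ⟨by rw [pow_one, trL], trL2, trL3⟩

lemma coeff_eq (hv : 3 ≤ v) (hreg : G'.IsRegularOfDegree δ) :
    (Matrix.charpoly (G'.lapMatrix ℝ)).coeff (v - 3)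
      = -(1/6 : ℝ) * (((v:ℝ)*δ)^3 - 3*((v:ℝ)*δ)*((v:ℝ)*δ^2 + (v:ℝ)*δ)
          + 2*((v:ℝ)*δ^3 + 2*(v:ℝ)*δ^2 + (v:ℝ)*δ + 2*(numVSubgraphs G' : ℝ))) := by
  have hA : (G'.lapMatrix ℝ).IsHermitian := (SimpleGraph.posSemidef_lapMatrix ℝ G').1
  set μ := hA.eigenvalues with hμ
  obtain ⟨ht1, ht2, ht3⟩ := trace_lap_pows G' hreg
  have p1 : ∑ i, μ i = v * δ := by
    have := trace_pow_hermitian hA 1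
    simp only [pow_one] at this ⊢
    rw [← this]
    simpa using ht1
  have p2 : ∑ i, (μ i)^2 = (v:ℝ) * (δ:ℝ)^2 + v * δ := by
    rw [← trace_pow_hermitian hA 2]; exact ht2
  have p3 : ∑ i, (μ i)^3
      = v * (δ:ℝ)^3 + 2 * v * δ^2 + v * δ + 2 * (numVSubgraphs G' : ℝ) := by
    rw [← trace_pow_hermitian hA 3]; exact ht3
  obtain ⟨-, -, -, h3⟩ := newton3 μ Finset.univ
  have hcoeff : (Matrix.charpoly (G'.lapMatrix ℝ)).coeff (v - 3)
      = -(∑ t ∈ Finset.univ.powersetCard 3, ∏ i ∈ t, μ i) := by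
    rw [charpoly_hermitian_eq_prod hA]
    have hprod : (∏ i, (X - C (μ i)))
        = ((Finset.univ.val.map μ).map (fun r => X - C r)).prod := by
      rw [Multiset.map_map]
      rfl
    have hcard : Multiset.card (Finset.univ.val.map μ) = v := by
      simp
    rw [hprod, Multiset.prod_X_sub_C_coeff _ (by rw [hcard]; omega)]
    rw [hcard, show v - (v - 3) = 3 by omega, Finset.esymm_map_val]
    ring
  rw [hcoeff]
  rw [p1, p2, p3] at h3
  linarith [h3]

end Traces
end Comb

theorem stmt_16 (v δ : ℕ) (hv : 3 ≤ v)
    (G G' : SimpleGraph (Fin v)) [DecidableRel G.Adj] [DecidableRel G'.Adj]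
    (hreg : G.IsRegularOfDegree δ) (hreg' : G'.IsRegularOfDegree δ) :
    3 * ((Matrix.charpoly (G'.lapMatrix ℝ)).coeff (v - 3) -
          (Matrix.charpoly (G.lapMatrix ℝ)).coeff (v - 3)) =
      2 * ((numVSubgraphs G : ℝ) - numVSubgraphs G') := by
  rw [coeff_eq G' hv hreg', coeff_eq G hv hreg]
  ring
end

section
/- Let α ≥ 1 and m ≥ 2 be integers, set v = αm and δ = α(m−1), and let K = K_{α,…,α} be the complete m-partite graph with m parts of size α (two vertices adjacent iff they lie in different parts), which is δ-regular on v vertices. There exists x₀ > 0 such that for every real x ≥ x₀ and every δ-regular simple graph G′ on v vertices, one has det( L(K) + vx·I ) ≥ det( L(G′) + vx·I ) and trace( (L(K) + vx·I)^{−1} ) ≤ trace( (L(G′) + vx·I)^{−1} ). -/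
/-- The complete `m`-partite graph with `m` parts of size `α`: two vertices are
adjacent iff they lie in different parts. -/
def completeMultipartiteEqual (m α : ℕ) : SimpleGraph (Fin m × Fin α) where
  Adj a b := a.1 ≠ b.1
  symm := ⟨fun _ _ h => Ne.symm h⟩
  loopless := ⟨fun _ h => h rfl⟩

instance (m α : ℕ) : DecidableRel (completeMultipartiteEqual m α).Adj :=
  fun a b => inferInstanceAs (Decidable (a.1 ≠ b.1))


namespace Stmt19Aux

open Matrix Finset SimpleGraph Real

set_option linter.unusedSectionVars false

variable {n : Type*} [Fintype n] [DecidableEq n]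

lemma conj_pow (U B : Matrix n n ℝ) (hU : star U * U = 1) (k : ℕ) :
    (U * B * star U) ^ k = U * B ^ k * star U := by
  induction k with
  | zero =>
    simp only [pow_zero, mul_one]
    exact (mul_eq_one_comm.mp hU).symm
  | succ k ih =>
    rw [pow_succ, pow_succ, ih]
    calc U * B ^ k * star U * (U * B * star U)
        = U * B ^ k * (star U * U) * B * star U := by noncomm_ring
      _ = U * (B ^ k * B) * star U := by rw [hU]; noncomm_ring

lemma conj_trace (U B : Matrix n n ℝ) (hU : star U * U = 1) :
    trace (U * B * star U) = trace B := by
  rw [trace_mul_cycle, hU, one_mul]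

section spectral

variable {M : Matrix n n ℝ} (hM : M.IsHermitian)

lemma star_mul_U : star (hM.eigenvectorUnitary : Matrix n n ℝ) * hM.eigenvectorUnitary = 1 :=
  Unitary.star_mul_self_of_mem hM.eigenvectorUnitary.2

lemma U_mul_star : (hM.eigenvectorUnitary : Matrix n n ℝ) * star (hM.eigenvectorUnitary : Matrix n n ℝ) = 1 :=
  Unitary.mul_star_self_of_mem hM.eigenvectorUnitary.2

lemma spec_shift (c : ℝ) :
    M + c • (1 : Matrix n n ℝ) =
      (hM.eigenvectorUnitary : Matrix n n ℝ) * diagonal (fun i => hM.eigenvalues i + c) *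
        star (hM.eigenvectorUnitary : Matrix n n ℝ) := by
  have h1 : (diagonal (fun i => hM.eigenvalues i + c) : Matrix n n ℝ)
      = diagonal (RCLike.ofReal ∘ hM.eigenvalues) + c • 1 := by
    rw [smul_one_eq_diagonal, diagonal_add]
    rfl
  rw [h1, mul_add, add_mul]
  congr 1
  · exact hM.spectral_theorem
  · rw [mul_smul_comm, smul_mul_assoc, mul_one, U_mul_star hM]

lemma spec_det (c : ℝ) :
    det (M + c • (1 : Matrix n n ℝ)) = ∏ i, (c + hM.eigenvalues i) := by
  rw [spec_shift hM c, det_mul, det_mul, mul_right_comm, ← det_mul, U_mul_star hM,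
    det_one, one_mul, det_diagonal]
  exact Finset.prod_congr rfl fun i _ => add_comm _ _

lemma spec_trace_inv (c : ℝ) (hc : ∀ i, c + hM.eigenvalues i ≠ 0) :
    trace (M + c • (1 : Matrix n n ℝ))⁻¹ = ∑ i, (c + hM.eigenvalues i)⁻¹ := by
  have hinv : (M + c • (1 : Matrix n n ℝ))⁻¹ =
      (hM.eigenvectorUnitary : Matrix n n ℝ) * diagonal (fun i => (c + hM.eigenvalues i)⁻¹) *
        star (hM.eigenvectorUnitary : Matrix n n ℝ) := by
    apply inv_eq_right_inv
    rw [spec_shift hM c]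
    calc (hM.eigenvectorUnitary : Matrix n n ℝ) * diagonal (fun i => hM.eigenvalues i + c) *
          star (hM.eigenvectorUnitary : Matrix n n ℝ) *
          ((hM.eigenvectorUnitary : Matrix n n ℝ) * diagonal (fun i => (c + hM.eigenvalues i)⁻¹) *
            star (hM.eigenvectorUnitary : Matrix n n ℝ))
        = (hM.eigenvectorUnitary : Matrix n n ℝ) * (diagonal (fun i => hM.eigenvalues i + c) *
            (star (hM.eigenvectorUnitary : Matrix n n ℝ) * (hM.eigenvectorUnitary : Matrix n n ℝ)) *
            diagonal (fun i => (c + hM.eigenvalues i)⁻¹)) *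
            star (hM.eigenvectorUnitary : Matrix n n ℝ) := by noncomm_ring
      _ = 1 := by
          rw [star_mul_U hM, mul_one, diagonal_mul_diagonal]
          have : (fun i => (hM.eigenvalues i + c) * (c + hM.eigenvalues i)⁻¹) = fun _ => (1:ℝ) := by
            funext i
            rw [add_comm, mul_inv_cancel₀ (hc i)]
          rw [this, diagonal_one, mul_one, U_mul_star hM]
  rw [hinv, conj_trace _ _ (star_mul_U hM), trace_diagonal]

lemma spec_trace_pow (k : ℕ) :
    trace (M ^ k) = ∑ i, hM.eigenvalues i ^ k := by
  conv_lhs => rw [hM.spectral_theorem, Unitary.conjStarAlgAut_apply]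
  rw [conj_pow _ _ (star_mul_U hM), conj_trace _ _ (star_mul_U hM)]
  have : (diagonal (RCLike.ofReal ∘ hM.eigenvalues) : Matrix n n ℝ) ^ k
      = diagonal (fun i => hM.eigenvalues i ^ k) := by
    rw [diagonal_pow]; rfl
  rw [this, trace_diagonal]

end spectral


section BG
variable {V : Type*} [Fintype V] [DecidableEq V]

section graphs

variable (G : SimpleGraph V) [DecidableRel G.Adj]

lemma adj_entry_cases (i j : V) : G.adjMatrix ℝ i j = 0 ∨ G.adjMatrix ℝ i j = 1 := by
  by_cases h : G.Adj i j <;> simp [h]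

lemma adj_nonneg (i j : V) : 0 ≤ G.adjMatrix ℝ i j := by
  rcases adj_entry_cases G i j with h | h <;> rw [h] <;> norm_num

lemma adj_le_one (i j : V) : G.adjMatrix ℝ i j ≤ 1 := by
  rcases adj_entry_cases G i j with h | h <;> rw [h] <;> norm_num

lemma adj_symm_entry (i j : V) : G.adjMatrix ℝ i j = G.adjMatrix ℝ j i := by
  simp [adjMatrix_apply, G.adj_comm]

lemma adj_mul_symm (i j : V) : G.adjMatrix ℝ i j * G.adjMatrix ℝ j i = G.adjMatrix ℝ i j := by
  by_cases h : G.Adj i j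
  · simp [h, h.symm]
  · simp [h]

variable {G}
variable {δ : ℕ} (hreg : G.IsRegularOfDegree δ)

include hreg in
lemma row_sum : ∀ i, ∑ k, G.adjMatrix ℝ i k = (δ : ℝ) := by
  intro i
  have : ∑ k, G.adjMatrix ℝ i k = (G.degree i : ℝ) := by
    simp [adjMatrix_apply, degree, neighborFinset_eq_filter, sum_boole, Finset.filter_filter]
  rw [this, hreg i]

include hreg in
lemma col_sum : ∀ j, ∑ k, G.adjMatrix ℝ k j = (δ : ℝ) := by
  intro j
  have : ∀ k, G.adjMatrix ℝ k j = G.adjMatrix ℝ j k := fun k => adj_symm_entry G k j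
  simp_rw [this]
  exact row_sum hreg j

include hreg in
lemma lap_eq : G.lapMatrix ℝ = (δ : ℝ) • 1 - G.adjMatrix ℝ := by
  have h2 : G.degMatrix ℝ = (δ : ℝ) • 1 := by
    ext i j
    by_cases h : i = j
    · subst h; simp [degMatrix, hreg i]
    · simp [degMatrix, Matrix.diagonal_apply_ne _ h, Matrix.one_apply_ne h]
  rw [lapMatrix, h2]

include hreg in
lemma trace_adj_sq : trace (G.adjMatrix ℝ * G.adjMatrix ℝ) = (Fintype.card V : ℝ) * δ := by
  have : ∀ i, (G.adjMatrix ℝ * G.adjMatrix ℝ) i i = (δ : ℝ) := by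
    intro i
    rw [adjMatrix_mul_self_apply_self, hreg i]
  rw [Matrix.trace]
  simp_rw [Matrix.diag]
  rw [Finset.sum_congr rfl fun i _ => this i, Finset.sum_const, card_univ, nsmul_eq_mul]

include hreg in
lemma trace_lap : trace (G.lapMatrix ℝ) = (Fintype.card V : ℝ) * δ := by
  rw [lap_eq hreg, trace_sub, trace_smul, trace_one, trace_adjMatrix]
  simp [mul_comm]

include hreg in
lemma trace_lap_sq :
    trace (G.lapMatrix ℝ * G.lapMatrix ℝ)
      = (Fintype.card V : ℝ) * δ ^ 2 + (Fintype.card V : ℝ) * δ := by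
  rw [lap_eq hreg]
  simp only [sub_mul, mul_sub, smul_mul_assoc, mul_smul_comm, one_mul, mul_one, smul_smul]
  simp only [trace_sub, trace_smul, trace_one, trace_adjMatrix, trace_adj_sq hreg,
    smul_eq_mul]
  push_cast
  ring

include hreg in
lemma trace_lap_cube :
    trace (G.lapMatrix ℝ * G.lapMatrix ℝ * G.lapMatrix ℝ)
      = (Fintype.card V : ℝ) * δ ^ 3 + 3 * (Fintype.card V : ℝ) * δ ^ 2
        - trace (G.adjMatrix ℝ * G.adjMatrix ℝ * G.adjMatrix ℝ) := by
  rw [lap_eq hreg]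
  simp only [sub_mul, mul_sub, smul_mul_assoc, mul_smul_comm, one_mul, mul_one, smul_smul]
  simp only [trace_sub, trace_smul, trace_one, trace_adjMatrix, trace_adj_sq hreg,
    smul_eq_mul]
  push_cast
  ring

end graphs


section CC
variable (G : SimpleGraph V) [DecidableRel G.Adj]

/-- deficiency counting open cherries: paths j-i-k with k≠j not closed by an edge. -/
noncomputable def defect : ℝ :=
  ∑ j, ∑ k, ∑ i, if k = j then 0 else
    G.adjMatrix ℝ j i * G.adjMatrix ℝ i k * (1 - G.adjMatrix ℝ k j)

variable {G}

lemma defect_term_nonneg (j k i : V) :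
    0 ≤ (if k = j then (0:ℝ) else
      G.adjMatrix ℝ j i * G.adjMatrix ℝ i k * (1 - G.adjMatrix ℝ k j)) := by
  split
  · exact le_refl 0
  · have h1 := adj_nonneg G j i
    have h2 := adj_nonneg G i k
    have h3 := adj_le_one G k j
    exact mul_nonneg (mul_nonneg h1 h2) (by linarith)

lemma defect_nonneg : 0 ≤ defect G := by
  refine Finset.sum_nonneg fun j _ => Finset.sum_nonneg fun k _ => Finset.sum_nonneg fun i _ => ?_
  exact defect_term_nonneg j k i

lemma defect_eq_zero
    (hcl : ∀ ⦃x y z : V⦄, G.Adj x y → G.Adj y z → x ≠ z → G.Adj x z) :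
    defect G = 0 := by
  refine Finset.sum_eq_zero fun j _ => Finset.sum_eq_zero fun k _ => Finset.sum_eq_zero fun i _ => ?_
  by_cases hkj : k = j
  · simp [hkj]
  rw [if_neg hkj]
  by_cases h1 : G.Adj j i
  · by_cases h2 : G.Adj i k
    · have h3 : G.Adj k j := (hcl h1 h2 (fun hh => hkj hh.symm)).symm
      simp [h3]
    · simp [h2]
  · simp [h1]

lemma one_le_defect {x y z : V} (h1 : G.Adj x y) (h2 : G.Adj y z) (hne : x ≠ z)
    (h3 : ¬ G.Adj x z) : 1 ≤ defect G := by
  have hterm : (if z = x then (0:ℝ) else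
      G.adjMatrix ℝ x y * G.adjMatrix ℝ y z * (1 - G.adjMatrix ℝ z x)) = 1 := by
    rw [if_neg (fun hh => hne hh.symm)]
    have h3' : ¬ G.Adj z x := fun hh => h3 hh.symm
    simp [h1, h2, h3']
  have step1 : (1:ℝ) ≤ ∑ i, if z = x then (0:ℝ) else
      G.adjMatrix ℝ x i * G.adjMatrix ℝ i z * (1 - G.adjMatrix ℝ z x) := by
    have s1 := Finset.single_le_sum (f := fun i => if z = x then (0:ℝ) else
      G.adjMatrix ℝ x i * G.adjMatrix ℝ i z * (1 - G.adjMatrix ℝ z x))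
      (fun i _ => defect_term_nonneg x z i) (mem_univ y)
    rw [hterm] at s1
    exact s1
  have step2 : (1:ℝ) ≤ ∑ k, ∑ i, if k = x then (0:ℝ) else
      G.adjMatrix ℝ x i * G.adjMatrix ℝ i k * (1 - G.adjMatrix ℝ k x) := by
    refine le_trans step1 (Finset.single_le_sum (f := fun k => ∑ i, if k = x then (0:ℝ) else
      G.adjMatrix ℝ x i * G.adjMatrix ℝ i k * (1 - G.adjMatrix ℝ k x)) ?_ (mem_univ z))
    exact fun k _ => Finset.sum_nonneg fun i _ => defect_term_nonneg x k i
  refine le_trans step2 (Finset.single_le_sum (f := fun j => ∑ k, ∑ i, if k = j then (0:ℝ) else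
      G.adjMatrix ℝ j i * G.adjMatrix ℝ i k * (1 - G.adjMatrix ℝ k j)) ?_ (mem_univ x))
  exact fun j _ => Finset.sum_nonneg fun k _ => Finset.sum_nonneg fun i _ => defect_term_nonneg j k i

lemma trace_cube {d : ℕ} (hreg : G.IsRegularOfDegree d) :
    trace (G.adjMatrix ℝ * G.adjMatrix ℝ * G.adjMatrix ℝ)
      = (Fintype.card V : ℝ) * d ^ 2 - (Fintype.card V : ℝ) * d - defect G := by
  set a := G.adjMatrix ℝ with ha
  have stepA : trace (a * a * a) = ∑ j, ∑ k, ∑ i, a j i * a i k * a k j := by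
    simp only [Matrix.trace, Matrix.diag, Matrix.mul_apply, Finset.sum_mul]
  have stepB : ∀ j k i : V, a j i * a i k * a k j =
      (a j i * a i k - if k = j then a j i * a i k else 0)
        - (if k = j then 0 else a j i * a i k * (1 - a k j)) := by
    intro j k i
    by_cases hkj : k = j
    · subst hkj
      simp [ha]
    · rw [if_neg hkj, if_neg hkj]
      ring
  have hT1 : ∀ j : V, ∑ k, ∑ i, a j i * a i k = (d : ℝ) * d := by
    intro j
    rw [Finset.sum_comm]
    have h1 : ∀ i, ∑ k, a j i * a i k = a j i * d := by
      intro i; rw [← Finset.mul_sum, row_sum hreg i]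
    rw [Finset.sum_congr rfl fun i _ => h1 i, ← Finset.sum_mul, row_sum hreg j]
  have hT2 : ∀ j : V, ∑ k, ∑ i, (if k = j then a j i * a i k else 0) = (d : ℝ) := by
    intro j
    have h1 : ∀ k : V, ∑ i, (if k = j then a j i * a i k else 0)
        = if k = j then (∑ i, a j i * a i j) else 0 := by
      intro k
      by_cases hkj : k = j
      · subst hkj; simp
      · simp [hkj]
    rw [Finset.sum_congr rfl fun k _ => h1 k, Finset.sum_ite_eq' univ j
      (fun _ => ∑ i, a j i * a i j), if_pos (mem_univ j)]
    have h2 : ∀ i, a j i * a i j = a j i := fun i => adj_mul_symm G j i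
    rw [Finset.sum_congr rfl fun i _ => h2 i, row_sum hreg j]
  rw [stepA]
  rw [Finset.sum_congr rfl fun j _ => Finset.sum_congr rfl fun k _ =>
    Finset.sum_congr rfl fun i _ => stepB j k i]
  simp only [Finset.sum_sub_distrib]
  rw [Finset.sum_congr rfl fun j _ => hT1 j, Finset.sum_congr rfl fun j _ => hT2 j]
  rw [Finset.sum_const, Finset.sum_const, card_univ, nsmul_eq_mul, nsmul_eq_mul]
  unfold defect
  rw [← ha]
  push_cast
  ring

/-- the all-ones matrix -/
def Jmat (V : Type*) : Matrix V V ℝ := Matrix.of fun _ _ => 1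

lemma trace_J : trace (Jmat V) = (Fintype.card V : ℝ) := by
  simp [Jmat, Matrix.trace, Matrix.diag, card_univ]

lemma JJ : Jmat V * Jmat V = (Fintype.card V : ℝ) • Jmat V := by
  ext i j
  simp [Jmat, Matrix.mul_apply, card_univ]

lemma adj_mul_J {d : ℕ} (hreg : G.IsRegularOfDegree d) :
    G.adjMatrix ℝ * Jmat V = (d : ℝ) • Jmat V := by
  ext i j
  simp only [Matrix.mul_apply, Jmat, Matrix.of_apply, mul_one, Matrix.smul_apply,
    smul_eq_mul]
  rw [row_sum hreg i]

lemma J_mul_adj {d : ℕ} (hreg : G.IsRegularOfDegree d) :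
    Jmat V * G.adjMatrix ℝ = (d : ℝ) • Jmat V := by
  ext i j
  simp only [Matrix.mul_apply, Jmat, Matrix.of_apply, one_mul, Matrix.smul_apply,
    smul_eq_mul]
  rw [col_sum hreg j]
  ring

lemma compl_adjMatrix : (Gᶜ).adjMatrix ℝ = Jmat V - 1 - G.adjMatrix ℝ := by
  ext i j
  by_cases hij : i = j
  · subst hij
    simp [Jmat]
  · by_cases hadj : G.Adj i j
    · have : ¬ (Gᶜ).Adj i j := by simp [compl_adj, hadj]
      simp [this, hadj, Jmat, Matrix.one_apply_ne hij]
    · have : (Gᶜ).Adj i j := by simp [compl_adj, hij, hadj]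
      simp [this, hadj, Jmat, Matrix.one_apply_ne hij]

/-- the constant in the complementation identity for the cube trace -/
noncomputable def compConst (v d : ℝ) : ℝ :=
  ((v - 2*(d+1)) * v) * v - ((v - 2*(d+1)) * (d+1)) * v + ((d+1)*(d+1)) * v - (v + 3*(v*d))

lemma compl_trace_cube {d : ℕ} (hreg : G.IsRegularOfDegree d) :
    trace ((Gᶜ).adjMatrix ℝ * (Gᶜ).adjMatrix ℝ * (Gᶜ).adjMatrix ℝ)
      = compConst (Fintype.card V) d
        - trace (G.adjMatrix ℝ * G.adjMatrix ℝ * G.adjMatrix ℝ) := by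
  set a := G.adjMatrix ℝ with ha
  set J := Jmat V with hJ
  set B : Matrix V V ℝ := 1 + a with hB
  have hcompl : (Gᶜ).adjMatrix ℝ = J - B := by
    rw [compl_adjMatrix, hB, sub_sub]
  have hBJ : B * J = ((d : ℝ) + 1) • J := by
    rw [hB, add_mul, one_mul, adj_mul_J hreg]
    module
  have hJB : J * B = ((d : ℝ) + 1) • J := by
    rw [hB, mul_add, mul_one, J_mul_adj hreg]
    module
  have hB2J : B * B * J = (((d : ℝ) + 1) * ((d : ℝ) + 1)) • J := by
    rw [mul_assoc, hBJ, mul_smul_comm, hBJ, smul_smul]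
  have h1 : (J - B) * (J - B) = ((Fintype.card V : ℝ) - 2*((d:ℝ)+1)) • J + B * B := by
    rw [sub_mul, mul_sub, mul_sub, JJ, hJB, hBJ]
    module
  have h2 : (J - B) * (J - B) * (J - B)
      = ((((Fintype.card V : ℝ) - 2*((d:ℝ)+1)) * (Fintype.card V : ℝ)) • J
          - (((Fintype.card V : ℝ) - 2*((d:ℝ)+1)) * ((d:ℝ)+1)) • J)
        + ((((d:ℝ)+1) * ((d:ℝ)+1)) • J - B * B * B) := by
    rw [h1, add_mul, mul_sub, mul_sub, smul_mul_assoc, smul_mul_assoc, JJ, hJB, hB2J]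
    rw [smul_smul, smul_smul]
  have hB3 : trace (B * B * B)
      = (Fintype.card V : ℝ) + 3 * ((Fintype.card V : ℝ) * d) + trace (a * a * a) := by
    rw [hB, ha]
    simp only [add_mul, mul_add, one_mul, mul_one, trace_add, trace_one, trace_adjMatrix,
      trace_adj_sq hreg]
    push_cast
    ring
  rw [hcompl, h2, trace_add, trace_sub, trace_sub, trace_smul, trace_smul, trace_smul,
    trace_J, hB3]
  unfold compConst
  push_cast
  simp only [smul_eq_mul]
  ring
end CC
end BG

lemma inv_expand (c u : ℝ) (hc : 0 < c) (hu : 0 ≤ u) :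
    (c + u)⁻¹ = 1/c - u/c^2 + u^2/c^3 - u^3/c^4 + u^4/(c^4*(c+u)) := by
  have hcu : c + u ≠ 0 := by positivity
  have hc' : c ≠ 0 := ne_of_gt hc
  field_simp
  ring

lemma log_expand_lb (c u : ℝ) (hc : 0 < c) (hu : 0 ≤ u) (huc : u ≤ c/2) :
    u/c - u^2/(2*c^2) + u^3/(3*c^3) - 2*(u/c)^4 ≤ Real.log (1 + u/c) ∧
    Real.log (1 + u/c) ≤ u/c - u^2/(2*c^2) + u^3/(3*c^3) + 2*(u/c)^4 := by
  set q : ℝ := u / c with hq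
  have hq0 : 0 ≤ q := by positivity
  have hq2 : q ≤ 1/2 := by
    rw [hq, div_le_div_iff₀ hc (by norm_num)]
    linarith
  have habs : |(-q)| < 1 := by
    rw [abs_neg, abs_of_nonneg hq0]; linarith
  have key := Real.abs_log_sub_add_sum_range_le habs 3
  have hsum : (∑ i ∈ Finset.range 3, (-q) ^ (i + 1) / (i + 1)) = -q + q^2/2 - q^3/3 := by
    simp [Finset.sum_range_succ]
    ring
  have h1mq : Real.log (1 - -q) = Real.log (1 + q) := by norm_num
  rw [hsum, h1mq] at key
  have hbnd : |(-q)| ^ (3+1) / (1 - |(-q)|) ≤ 2 * q^4 := by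
    rw [abs_neg, abs_of_nonneg hq0]
    have h2 : (1:ℝ)/2 ≤ 1 - q := by linarith
    have h3 : q ^ 4 / (1 - q) ≤ q^4 / (1/2) :=
      div_le_div_of_nonneg_left (by positivity) (by norm_num) h2
    calc q ^ (3+1) / (1 - q) ≤ q^4/(1/2) := h3
      _ = 2 * q^4 := by ring
  have key2 : |Real.log (1+q) - (q - q^2/2 + q^3/3)| ≤ 2*q^4 := by
    have : -q + q^2/2 - q^3/3 + Real.log (1+q) = Real.log (1+q) - (q - q^2/2 + q^3/3) := by ring
    rw [this] at key
    exact le_trans key hbnd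
  rw [abs_le] at key2
  have e1 : q - q^2/2 + q^3/3 = u/c - u^2/(2*c^2) + u^3/(3*c^3) := by
    rw [hq]; field_simp
  constructor
  · have := key2.1; rw [e1] at this; linarith
  · have := key2.2; rw [e1] at this; linarith


lemma sum_inv_expand {τ : Type*} [Fintype τ] (f : τ → ℝ) (c : ℝ) (hcpos : 0 < c)
    (n : ℕ) (hcard : Fintype.card τ = n) (hf0 : ∀ i, 0 ≤ f i) :
    ∑ i, (c + f i)⁻¹ = (n:ℝ)/c - (∑ i, f i)/c^2 + (∑ i, f i^2)/c^3 - (∑ i, f i^3)/c^4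
      + ∑ i, (f i)^4/(c^4*(c + f i)) := by
  rw [Finset.sum_congr rfl fun i _ => inv_expand c (f i) hcpos (hf0 i)]
  rw [Finset.sum_add_distrib, Finset.sum_sub_distrib, Finset.sum_add_distrib,
    Finset.sum_sub_distrib]
  rw [Finset.sum_const, card_univ, hcard]
  rw [← Finset.sum_div, ← Finset.sum_div, ← Finset.sum_div]
  push_cast
  ring_nf

lemma sum_err_bound {τ : Type*} [Fintype τ] (f : τ → ℝ) (c R : ℝ) (hcpos : 0 < c)
    (n : ℕ) (hcard : Fintype.card τ = n) (hf0 : ∀ i, 0 ≤ f i) (hfR : ∀ i, f i ≤ R)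
    (hR : 1 ≤ R) :
    0 ≤ ∑ i, (f i)^4/(c^4*(c + f i)) ∧ ∑ i, (f i)^4/(c^4*(c + f i)) ≤ (n:ℝ)*R^4/c^5 := by
  constructor
  · exact Finset.sum_nonneg fun i _ => by
      have := hf0 i; positivity
  · calc ∑ i, (f i)^4/(c^4*(c + f i)) ≤ ∑ _i : τ, R^4/c^5 := by
          refine Finset.sum_le_sum fun i _ => ?_
          have h5 : c^5 ≤ c^4*(c + f i) := by
            have h6 : c^4*c ≤ c^4*(c+f i) :=
              mul_le_mul_of_nonneg_left (by have := hf0 i; linarith) (by positivity)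
            calc c^5 = c^4*c := by ring
              _ ≤ _ := h6
          have hnum : (f i)^4 ≤ R^4 := pow_le_pow_left₀ (hf0 i) (hfR i) 4
          exact div_le_div₀ (by positivity) hnum (by positivity) h5
      _ = (n:ℝ)*R^4/c^5 := by
          rw [Finset.sum_const, card_univ, hcard, nsmul_eq_mul]; ring

lemma analytic_strict {ι κ : Type*} [Fintype ι] [Fintype κ] (lam : ι → ℝ) (mu : κ → ℝ)
    (n : ℕ) (hn1 : Fintype.card ι = n) (hn2 : Fintype.card κ = n)
    (R : ℝ) (hR : 1 ≤ R)
    (hlam0 : ∀ i, 0 ≤ lam i) (hmu0 : ∀ i, 0 ≤ mu i)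
    (hlamR : ∀ i, lam i ≤ R) (hmuR : ∀ i, mu i ≤ R)
    (h1 : ∑ i, lam i = ∑ i, mu i)
    (h2 : ∑ i, lam i ^ 2 = ∑ i, mu i ^ 2)
    (h3 : ∑ i, mu i ^ 3 < ∑ i, lam i ^ 3) :
    ∃ c₀ : ℝ, 1 ≤ c₀ ∧ ∀ c : ℝ, c₀ ≤ c →
      (∏ i, (c + mu i) ≤ ∏ i, (c + lam i)) ∧
      (∑ i, (c + lam i)⁻¹ ≤ ∑ i, (c + mu i)⁻¹) := by
  set d : ℝ := ∑ i, lam i ^ 3 - ∑ i, mu i ^ 3 with hd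
  have hdpos : 0 < d := by rw [hd]; linarith
  refine ⟨1 + 2*R + 12*n*R^4/d, ?_, fun c hc => ?_⟩
  · have hA : (0:ℝ) ≤ 2*R := by positivity
    have hB : (0:ℝ) ≤ 12*n*R^4/d := by positivity
    linarith
  have hcpos : 0 < c := by
    have : (0:ℝ) < 1 + 2*R + 12*n*R^4/d := by positivity
    linarith
  have hc2R : 2*R ≤ c := by
    have : (0:ℝ) ≤ 12*n*R^4/d := by positivity
    linarith
  have hcd : 12*n*R^4/d ≤ c := by linarith
  have hcd' : 12*n*R^4 ≤ c * d := by
    rw [div_le_iff₀ hdpos] at hcd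
    linarith [hcd]
  -- positivity of shifted values
  have hposl : ∀ i, 0 < c + lam i := fun i => by have := hlam0 i; linarith
  have hposm : ∀ i, 0 < c + mu i := fun i => by have := hmu0 i; linarith
  constructor
  · -- determinant part via logs
    have hprodl : ∏ i, (c + lam i) = Real.exp (∑ i, Real.log (c + lam i)) := by
      rw [Real.exp_sum]
      exact (Finset.prod_congr rfl fun i _ => (Real.exp_log (hposl i)).symm)
    have hprodm : ∏ i, (c + mu i) = Real.exp (∑ i, Real.log (c + mu i)) := by
      rw [Real.exp_sum]
      exact (Finset.prod_congr rfl fun i _ => (Real.exp_log (hposm i)).symm)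
    rw [hprodl, hprodm, Real.exp_le_exp]
    have hsplit : ∀ (u : ℝ), 0 ≤ u → Real.log (c + u) = Real.log c + Real.log (1 + u/c) := by
      intro u hu
      rw [← Real.log_mul (ne_of_gt hcpos) (by positivity)]
      congr 1
      field_simp
    have hlogl : ∀ i, Real.log (c + lam i) = Real.log c + Real.log (1 + lam i/c) :=
      fun i => hsplit _ (hlam0 i)
    have hlogm : ∀ i, Real.log (c + mu i) = Real.log c + Real.log (1 + mu i/c) :=
      fun i => hsplit _ (hmu0 i)
    rw [Finset.sum_congr rfl fun i _ => hlogl i, Finset.sum_congr rfl fun i _ => hlogm i,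
      Finset.sum_add_distrib, Finset.sum_add_distrib]
    simp only [Finset.sum_const, card_univ, hn1, hn2, nsmul_eq_mul]
    gcongr
    -- lower bound for lam side, upper for mu side
    have hbl : ∀ i : ι, lam i/c - (lam i)^2/(2*c^2) + (lam i)^3/(3*c^3) - 2*(lam i/c)^4
        ≤ Real.log (1 + lam i/c) := by
      intro i
      exact (log_expand_lb c (lam i) hcpos (hlam0 i) (by have := hlamR i; linarith)).1
    have hbm : ∀ i : κ, Real.log (1 + mu i/c)
        ≤ mu i/c - (mu i)^2/(2*c^2) + (mu i)^3/(3*c^3) + 2*(mu i/c)^4 := by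
      intro i
      exact (log_expand_lb c (mu i) hcpos (hmu0 i) (by have := hmuR i; linarith)).2
    have herr : ∀ (u : ℝ), 0 ≤ u → u ≤ R → 2*(u/c)^4 ≤ 2*R^4/c^4 := by
      intro u hu huR
      have h4 : (0:ℝ) < c^4 := by positivity
      have e : 2*(u/c)^4 = 2*u^4/c^4 := by rw [div_pow]; ring
      rw [e, div_le_div_iff₀ h4 h4]
      nlinarith [pow_le_pow_left₀ hu huR 4, pow_pos hcpos 4]
    have hsuml : ∑ i, lam i/c - ∑ i, (lam i)^2/(2*c^2) + ∑ i, (lam i)^3/(3*c^3)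
          - (n:ℝ)*(2*R^4/c^4)
        ≤ ∑ i, Real.log (1 + lam i/c) := by
      have e : ∑ i, (lam i/c - (lam i)^2/(2*c^2) + (lam i)^3/(3*c^3) - 2*(lam i/c)^4)
          ≤ ∑ i, Real.log (1 + lam i/c) := Finset.sum_le_sum fun i _ => hbl i
      have e2 : ∑ i : ι, (2*(lam i/c)^4) ≤ (n:ℝ)*(2*R^4/c^4) := by
        calc ∑ i : ι, (2*(lam i/c)^4) ≤ ∑ _i : ι, 2*R^4/c^4 :=
              Finset.sum_le_sum fun i _ => herr _ (hlam0 i) (hlamR i)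
          _ = (n:ℝ)*(2*R^4/c^4) := by rw [Finset.sum_const, card_univ, hn1, nsmul_eq_mul]
      have e3 : ∑ i, (lam i/c - (lam i)^2/(2*c^2) + (lam i)^3/(3*c^3) - 2*(lam i/c)^4)
          = ∑ i, lam i/c - ∑ i, (lam i)^2/(2*c^2) + ∑ i, (lam i)^3/(3*c^3)
            - ∑ i : ι, (2*(lam i/c)^4) := by
        rw [← Finset.sum_sub_distrib, ← Finset.sum_add_distrib, ← Finset.sum_sub_distrib]
      rw [e3] at e
      linarith
    have hsumm : ∑ i, Real.log (1 + mu i/c)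
        ≤ ∑ i, mu i/c - ∑ i, (mu i)^2/(2*c^2) + ∑ i, (mu i)^3/(3*c^3)
          + (n:ℝ)*(2*R^4/c^4) := by
      have e : ∑ i, Real.log (1 + mu i/c)
          ≤ ∑ i, (mu i/c - (mu i)^2/(2*c^2) + (mu i)^3/(3*c^3) + 2*(mu i/c)^4) :=
        Finset.sum_le_sum fun i _ => hbm i
      have e2 : ∑ i : κ, (2*(mu i/c)^4) ≤ (n:ℝ)*(2*R^4/c^4) := by
        calc ∑ i : κ, (2*(mu i/c)^4) ≤ ∑ _i : κ, 2*R^4/c^4 :=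
              Finset.sum_le_sum fun i _ => herr _ (hmu0 i) (hmuR i)
          _ = (n:ℝ)*(2*R^4/c^4) := by rw [Finset.sum_const, card_univ, hn2, nsmul_eq_mul]
      have e3 : ∑ i, (mu i/c - (mu i)^2/(2*c^2) + (mu i)^3/(3*c^3) + 2*(mu i/c)^4)
          = ∑ i, mu i/c - ∑ i, (mu i)^2/(2*c^2) + ∑ i, (mu i)^3/(3*c^3)
            + ∑ i : κ, (2*(mu i/c)^4) := by
        rw [← Finset.sum_sub_distrib, ← Finset.sum_add_distrib, ← Finset.sum_add_distrib]
      rw [e3] at e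
      linarith
    -- compare main terms
    have hm1 : ∑ i, lam i/c = ∑ i, mu i/c := by
      rw [← Finset.sum_div, ← Finset.sum_div, h1]
    have hm2 : ∑ i, (lam i)^2/(2*c^2) = ∑ i, (mu i)^2/(2*c^2) := by
      rw [← Finset.sum_div, ← Finset.sum_div, h2]
    have hm3 : ∑ i, (mu i)^3/(3*c^3) + d/(3*c^3) = ∑ i, (lam i)^3/(3*c^3) := by
      rw [← Finset.sum_div, ← Finset.sum_div, ← add_div, hd]
      congr 1
      ring
    have hgap : (n:ℝ)*(2*R^4/c^4) + (n:ℝ)*(2*R^4/c^4) ≤ d/(3*c^3) := by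
      have hc3 : (0:ℝ) < c^3 := by positivity
      have hstep : 12*(n:ℝ)*R^4*c^3 ≤ (c*d)*c^3 :=
        mul_le_mul_of_nonneg_right hcd' (le_of_lt hc3)
      calc (n:ℝ)*(2*R^4/c^4) + (n:ℝ)*(2*R^4/c^4) = 4*n*R^4/c^4 := by ring
        _ ≤ d/(3*c^3) := by
            rw [div_le_div_iff₀ (by positivity) (by positivity)]
            calc 4*(n:ℝ)*R^4*(3*c^3) = 12*n*R^4*c^3 := by ring
              _ ≤ (c*d)*c^3 := hstep
              _ = d*c^4 := by ring
    calc ∑ i, Real.log (1 + mu i/c)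
        ≤ ∑ i, mu i/c - ∑ i, (mu i)^2/(2*c^2) + ∑ i, (mu i)^3/(3*c^3)
          + (n:ℝ)*(2*R^4/c^4) := hsumm
      _ ≤ ∑ i, lam i/c - ∑ i, (lam i)^2/(2*c^2) + ∑ i, (lam i)^3/(3*c^3)
          - (n:ℝ)*(2*R^4/c^4) := by
          rw [hm1, hm2, ← hm3]
          linarith
      _ ≤ ∑ i, Real.log (1 + lam i/c) := hsuml
  · -- trace part
    have el := sum_inv_expand lam c hcpos n hn1 hlam0
    have em := sum_inv_expand mu c hcpos n hn2 hmu0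
    have eel := sum_err_bound lam c R hcpos n hn1 hlam0 hlamR hR
    have eem := sum_err_bound mu c R hcpos n hn2 hmu0 hmuR hR
    rw [el, em, h1, h2]
    have hgap2 : (n:ℝ)*R^4/c^5 ≤ d/c^4 := by
      rw [div_le_div_iff₀ (by positivity) (by positivity)]
      have hc4 : (0:ℝ) < c^4 := by positivity
      have : (n:ℝ)*R^4 ≤ c*d/12 := by nlinarith [hcd']
      calc (n:ℝ)*R^4*c^4 ≤ (c*d/12)*c^4 := mul_le_mul_of_nonneg_right this (le_of_lt hc4)
        _ ≤ d*c^5 := by nlinarith [hdpos, hcpos, pow_pos hcpos 4, pow_pos hcpos 5]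
    have hmain : (∑ i, mu i ^ 3)/c^4 + d/c^4 = (∑ i, lam i ^ 3)/c^4 := by
      rw [hd]; field_simp; ring
    linarith [eel.1, eel.2, eem.1, eem.2]

section EE
variable {V : Type*} [Fintype V] [DecidableEq V]
variable {G : SimpleGraph V} [DecidableRel G.Adj]

/-- bundle of spectral facts for the Laplacian of a regular graph -/
lemma graph_spec {δ : ℕ} (hreg : G.IsRegularOfDegree δ) :
    ∃ ev : V → ℝ, (∀ i, 0 ≤ ev i) ∧ (∀ i, ev i ≤ (Fintype.card V : ℝ) * δ) ∧
      (∑ i, ev i = (Fintype.card V : ℝ) * δ) ∧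
      (∑ i, ev i ^ 2 = (Fintype.card V : ℝ) * δ ^ 2 + (Fintype.card V : ℝ) * δ) ∧
      (∑ i, ev i ^ 3 = (Fintype.card V : ℝ) * δ ^ 3 + 3 * (Fintype.card V : ℝ) * δ ^ 2
        - trace (G.adjMatrix ℝ * G.adjMatrix ℝ * G.adjMatrix ℝ)) ∧
      (∀ c : ℝ, det (G.lapMatrix ℝ + c • (1 : Matrix V V ℝ)) = ∏ i, (c + ev i)) ∧
      (∀ c : ℝ, 0 < c →
        trace ((G.lapMatrix ℝ + c • (1 : Matrix V V ℝ))⁻¹) = ∑ i, (c + ev i)⁻¹) := by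
  have hpsd := posSemidef_lapMatrix ℝ G
  have hH : (G.lapMatrix ℝ).IsHermitian := hpsd.1
  refine ⟨hH.eigenvalues, fun i => hpsd.eigenvalues_nonneg i, ?_, ?_, ?_, ?_, ?_, ?_⟩
  · intro i
    have h1 : ∑ j, hH.eigenvalues j = (Fintype.card V : ℝ) * δ := by
      have := spec_trace_pow hH 1
      simp only [pow_one] at this
      rw [← this, trace_lap hreg]
    rw [← h1]
    exact Finset.single_le_sum (f := fun j => hH.eigenvalues j)
      (fun j _ => hpsd.eigenvalues_nonneg j) (mem_univ i)
  · have := spec_trace_pow hH 1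
    simp only [pow_one] at this
    rw [← this, trace_lap hreg]
  · have := spec_trace_pow hH 2
    rw [← this, pow_two, trace_lap_sq hreg]
  · have := spec_trace_pow hH 3
    rw [← this, pow_succ, pow_two, trace_lap_cube hreg]
  · intro c
    rw [spec_det hH c]
  · intro c hc
    rw [spec_trace_inv hH c fun i => by have := hpsd.eigenvalues_nonneg i; positivity]

end EE

section K
variable {m α : ℕ}

lemma card_K : Fintype.card (Fin m × Fin α) = α * m := by
  simp [Fintype.card_prod, Nat.mul_comm]

lemma K_regular (hα : 1 ≤ α) (hm : 2 ≤ m) :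
    (completeMultipartiteEqual m α).IsRegularOfDegree (α * (m - 1)) := by
  intro x
  have : (completeMultipartiteEqual m α).neighborFinset x
      = (univ.filter (· ≠ x.1)) ×ˢ (univ : Finset (Fin α)) := by
    ext y
    rw [mem_neighborFinset]
    simp [completeMultipartiteEqual, Finset.mem_product, ne_comm]
  rw [degree, this, Finset.card_product]
  rw [Finset.filter_ne' univ x.1, Finset.card_erase_of_mem (mem_univ _)]
  simp [Finset.card_univ, Nat.mul_comm]

lemma K_compl_cherry :
    ∀ ⦃x y z : Fin m × Fin α⦄, (completeMultipartiteEqual m α)ᶜ.Adj x y →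
      (completeMultipartiteEqual m α)ᶜ.Adj y z → x ≠ z →
      (completeMultipartiteEqual m α)ᶜ.Adj x z := by
  intro x y z h1 h2 hne
  rw [compl_adj] at h1 h2 ⊢
  refine ⟨hne, ?_⟩
  have e1 : x.1 = y.1 := not_not.mp (by simpa [completeMultipartiteEqual] using h1.2)
  have e2 : y.1 = z.1 := not_not.mp (by simpa [completeMultipartiteEqual] using h2.2)
  simp [completeMultipartiteEqual, e1, e2]


end K

section FF
variable {V : Type*} [Fintype V] [DecidableEq V]

section equivcase
variable {V : Type*} [Fintype V] [DecidableEq V]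

/-- If the complement of `G` has transitively-closed adjacency (no open cherries) and
`G` is regular, then `G` is a complete multipartite graph with equal parts. -/
lemma exists_equiv_K {G : SimpleGraph V} [DecidableRel G.Adj] {m α : ℕ}
    (hα : 1 ≤ α) (hm : 2 ≤ m) (hcard : Fintype.card V = α * m)
    (hdeg : Gᶜ.IsRegularOfDegree (α - 1))
    (hcl : ∀ ⦃x y z : V⦄, Gᶜ.Adj x y → Gᶜ.Adj y z → x ≠ z → Gᶜ.Adj x z) :
    ∃ e : V ≃ Fin m × Fin α, ∀ x y : V,
      G.Adj x y ↔ (completeMultipartiteEqual m α).Adj (e x) (e y) := by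
  classical
  let s : Setoid V := ⟨fun x y => x = y ∨ Gᶜ.Adj x y, by
    constructor
    · exact fun x => Or.inl rfl
    · rintro x y (rfl | h)
      · exact Or.inl rfl
      · exact Or.inr h.symm
    · rintro x y z (rfl | h1) h2
      · exact h2
      · rcases h2 with rfl | h2
        · exact Or.inr h1
        · by_cases hxz : x = z
          · exact Or.inl hxz
          · exact Or.inr (hcl h1 h2 hxz)⟩
  let f : V → Quotient s := Quotient.mk s
  have hfiber : ∀ y : V, Fintype.card {x // f x = f y} = α := by
    intro y
    have hset : (univ.filter (fun x => f x = f y))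
        = insert y (Gᶜ.neighborFinset y) := by
      ext x
      simp only [Finset.mem_filter, mem_univ, true_and, Finset.mem_insert,
        mem_neighborFinset]
      constructor
      · intro h
        have : x = y ∨ Gᶜ.Adj x y := Quotient.eq.mp h
        rcases this with rfl | h'
        · exact Or.inl rfl
        · exact Or.inr h'.symm
      · rintro (rfl | h)
        · rfl
        · exact Quotient.sound (Or.inr h.symm)
    have hcardfil : Fintype.card {x // f x = f y}
        = (univ.filter (fun x => f x = f y)).card := by
      rw [Fintype.card_subtype]
    rw [hcardfil, hset, Finset.card_insert_of_notMem (by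
      simp only [mem_neighborFinset]
      exact fun h => (Gᶜ.loopless.irrefl y) h), ← degree, hdeg y]
    omega
  have hQcard : Fintype.card (Quotient s) * α = α * m := by
    have this : Fintype.card (Σ q : Quotient s, {x // f x = q})
        = ∑ q : Quotient s, Fintype.card {x // f x = q} := Fintype.card_sigma
    rw [Fintype.card_congr (Equiv.sigmaFiberEquiv f)] at this
    rw [hcard] at this
    have heach : ∀ q : Quotient s, Fintype.card {x // f x = q} = α := by
      intro q
      obtain ⟨y, rfl⟩ := Quotient.exists_rep q
      exact hfiber y
    rw [Finset.sum_congr rfl fun q _ => heach q, Finset.sum_const, card_univ,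
      smul_eq_mul] at this
    omega
  have hQ : Fintype.card (Quotient s) = m := by
    have hα0 : 0 < α := hα
    have := hQcard
    rw [Nat.mul_comm α m] at this
    exact Nat.eq_of_mul_eq_mul_right hα0 this
  let eQ : Quotient s ≃ Fin m := Fintype.equivFinOfCardEq hQ
  let eF : ∀ q : Quotient s, {x // f x = q} ≃ Fin α := fun q =>
    Fintype.equivFinOfCardEq (by
      obtain ⟨y, rfl⟩ := Quotient.exists_rep q
      exact hfiber y)
  let e : V ≃ Fin m × Fin α :=
    (Equiv.sigmaFiberEquiv f).symm.trans
      ((Equiv.sigmaCongr eQ eF).trans (Equiv.sigmaEquivProd (Fin m) (Fin α)))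
  have hfst : ∀ x : V, (e x).1 = eQ (f x) := fun x => rfl
  refine ⟨e, fun x y => ?_⟩
  have hKadj : (completeMultipartiteEqual m α).Adj (e x) (e y) ↔ (e x).1 ≠ (e y).1 :=
    Iff.rfl
  rw [hKadj, hfst, hfst]
  have hiff : eQ (f x) ≠ eQ (f y) ↔ f x ≠ f y := by
    constructor
    · intro h h'; exact h (by rw [h'])
    · intro h h'; exact h (eQ.injective h')
  rw [hiff]
  have hfeq : f x = f y ↔ (x = y ∨ Gᶜ.Adj x y) := by
    constructor
    · intro h; exact Quotient.eq.mp h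
    · intro h; exact Quotient.sound h
  constructor
  · intro hadj heq
    rcases hfeq.mp heq with rfl | h
    · exact G.loopless.irrefl x hadj
    · exact h.2 hadj
  · intro hne
    by_cases hxy : x = y
    · exact absurd (hfeq.mpr (Or.inl hxy)) hne
    · by_cases hadj : G.Adj x y
      · exact hadj
      · exact absurd (hfeq.mpr (Or.inr ⟨hxy, hadj⟩)) hne

end equivcase

lemma trace_submatrix_equiv' {W W' : Type*} [Fintype W] [Fintype W'] (e : W ≃ W')
    (B : Matrix W' W' ℝ) : Matrix.trace (B.submatrix e e) = Matrix.trace B := by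
  simp only [Matrix.trace, Matrix.diag, Matrix.submatrix_apply]
  exact Equiv.sum_comp e fun i => B i i

end FF

section KEY

lemma key_lemma (α m v δ : ℕ) (hα : 1 ≤ α) (hm : 2 ≤ m) (hv : v = α * m)
    (hδ : δ = α * (m - 1)) (G'' : SimpleGraph (Fin v)) [DecidableRel G''.Adj] :
    ∃ c₀ : ℝ, 1 ≤ c₀ ∧ ∀ c : ℝ, c₀ ≤ c → G''.IsRegularOfDegree δ →
      (Matrix.det (G''.lapMatrix ℝ + c • (1 : Matrix (Fin v) (Fin v) ℝ)) ≤
        Matrix.det ((completeMultipartiteEqual m α).lapMatrix ℝ +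
          c • (1 : Matrix (Fin m × Fin α) (Fin m × Fin α) ℝ)) ∧
       Matrix.trace (((completeMultipartiteEqual m α).lapMatrix ℝ +
          c • (1 : Matrix (Fin m × Fin α) (Fin m × Fin α) ℝ))⁻¹) ≤
        Matrix.trace ((G''.lapMatrix ℝ + c • (1 : Matrix (Fin v) (Fin v) ℝ))⁻¹)) := by
  by_cases hreg'' : G''.IsRegularOfDegree δ
  swap
  · exact ⟨1, le_refl 1, fun c hc h => absurd h hreg''⟩
  have hv2 : 2 ≤ v := by
    have := Nat.mul_le_mul hα hm
    omega
  have hv1 : 1 ≤ v := by omega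
  have hδ1 : 1 ≤ δ := by
    have h1 : 1 ≤ m - 1 := by omega
    have := Nat.mul_le_mul hα h1
    omega
  have cardV : Fintype.card (Fin v) = v := Fintype.card_fin v
  have cardK : Fintype.card (Fin m × Fin α) = v := by
    rw [card_K]; omega
  have hKreg : (completeMultipartiteEqual m α).IsRegularOfDegree δ := by
    rw [hδ]; exact K_regular hα hm
  have hd' : v - 1 - δ = α - 1 := by
    have hmm : α * (m - 1) + α = α * m := by
      rw [← Nat.mul_succ]
      congr 1
      omega
    omega
  have hKcompreg : (completeMultipartiteEqual m α)ᶜ.IsRegularOfDegree (α - 1) := by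
    have := hKreg.compl
    rwa [cardK, hd'] at this
  have hGcompreg : G''ᶜ.IsRegularOfDegree (α - 1) := by
    have := hreg''.compl
    rwa [cardV, hd'] at this
  by_cases hcl : ∀ ⦃x y z : Fin v⦄, G''ᶜ.Adj x y → G''ᶜ.Adj y z → x ≠ z → G''ᶜ.Adj x z
  · -- equality case: G'' is isomorphic to K
    obtain ⟨e, he⟩ := exists_equiv_K hα hm (by rw [cardV]; exact hv) hGcompreg hcl
    refine ⟨1, le_refl 1, fun c hc _ => ?_⟩
    have hadjm : G''.adjMatrix ℝ
        = ((completeMultipartiteEqual m α).adjMatrix ℝ).submatrix e e := by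
      ext x y
      simp only [adjMatrix_apply, Matrix.submatrix_apply]
      by_cases h : G''.Adj x y
      · rw [if_pos h, if_pos ((he x y).mp h)]
      · rw [if_neg h, if_neg (fun hh => h ((he x y).mpr hh))]
    have hmat : G''.lapMatrix ℝ + c • (1 : Matrix (Fin v) (Fin v) ℝ)
        = ((completeMultipartiteEqual m α).lapMatrix ℝ +
            c • (1 : Matrix (Fin m × Fin α) (Fin m × Fin α) ℝ)).submatrix e e := by
      rw [lap_eq hreg'', lap_eq hKreg, hadjm]
      ext i j
      simp only [Matrix.add_apply, Matrix.sub_apply, Matrix.smul_apply, Matrix.submatrix_apply,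
        Matrix.one_apply, smul_eq_mul]
      have heij : e i = e j ↔ i = j := ⟨fun h => e.injective h, fun h => by rw [h]⟩
      by_cases h : i = j
      · subst h
        simp
      · rw [if_neg h, if_neg (fun hh => h (heij.mp hh))]
    constructor
    · rw [hmat, Matrix.det_submatrix_equiv_self]
    · rw [hmat, Matrix.inv_submatrix_equiv, trace_submatrix_equiv']
  · -- strict case
    push_neg at hcl
    obtain ⟨x, y, z, h1, h2, hne, hnadj⟩ := hcl
    obtain ⟨lam, hlam0, hlamR, hl1, hl2, hl3, hldet, hltr⟩ := graph_spec hKreg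
    obtain ⟨mu, hmu0, hmuR, hm1, hm2, hm3, hmdet, hmtr⟩ := graph_spec hreg''
    rw [cardK] at hlamR hl1 hl2 hl3
    rw [cardV] at hmuR hm1 hm2 hm3
    have tK := compl_trace_cube hKreg
    have tG := compl_trace_cube hreg''
    have dK := trace_cube hKcompreg
    have dG := trace_cube hGcompreg
    have hdefK : defect ((completeMultipartiteEqual m α)ᶜ) = 0 :=
      defect_eq_zero K_compl_cherry
    have hdefG : 1 ≤ defect (G''ᶜ) := one_le_defect h1 h2 hne hnadj
    rw [cardK] at tK dK
    rw [cardV] at tG dG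
    have h3' : ∑ i, mu i ^ 3 < ∑ i, lam i ^ 3 := by
      rw [hl3, hm3]
      linarith
    have hR1 : (1:ℝ) ≤ (v:ℝ) * (δ:ℝ) := by
      have e1 : (1:ℝ) ≤ (v:ℝ) := by exact_mod_cast hv1
      have e2 : (1:ℝ) ≤ (δ:ℝ) := by exact_mod_cast hδ1
      nlinarith
    obtain ⟨c₀, hc₀1, hc₀⟩ := analytic_strict lam mu v cardK cardV ((v:ℝ) * (δ:ℝ)) hR1
      hlam0 hmu0 hlamR hmuR (by rw [hl1, hm1]) (by rw [hl2, hm2]) h3'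
    refine ⟨c₀, hc₀1, fun c hc _ => ?_⟩
    obtain ⟨hprod, hsum⟩ := hc₀ c hc
    have hcpos : (0:ℝ) < c := lt_of_lt_of_le one_pos (le_trans hc₀1 hc)
    constructor
    · rw [hmdet c, hldet c]
      exact hprod
    · rw [hmtr c hcpos, hltr c hcpos]
      exact hsum

end KEY

end Stmt19Aux

theorem stmt_19 (α m : ℕ) (hα : 1 ≤ α) (hm : 2 ≤ m) (v δ : ℕ)
    (hv : v = α * m) (hδ : δ = α * (m - 1)) :
    ∃ x₀ : ℝ, 0 < x₀ ∧ ∀ x : ℝ, x₀ ≤ x →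
      ∀ (G' : SimpleGraph (Fin v)) [DecidableRel G'.Adj],
        G'.IsRegularOfDegree δ →
        Matrix.det (G'.lapMatrix ℝ + ((v : ℝ) * x) • (1 : Matrix (Fin v) (Fin v) ℝ)) ≤
          Matrix.det ((completeMultipartiteEqual m α).lapMatrix ℝ +
            ((v : ℝ) * x) • (1 : Matrix (Fin m × Fin α) (Fin m × Fin α) ℝ)) ∧
        Matrix.trace (((completeMultipartiteEqual m α).lapMatrix ℝ +
            ((v : ℝ) * x) • (1 : Matrix (Fin m × Fin α) (Fin m × Fin α) ℝ))⁻¹) ≤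
          Matrix.trace ((G'.lapMatrix ℝ +
            ((v : ℝ) * x) • (1 : Matrix (Fin v) (Fin v) ℝ))⁻¹) := by
  have key : ∀ G'' : SimpleGraph (Fin v), ∃ c₀ : ℝ, 1 ≤ c₀ ∧ ∀ c : ℝ, c₀ ≤ c →
      (@SimpleGraph.IsRegularOfDegree (Fin v) G''
        (fun w => @SimpleGraph.neighborSetFintype (Fin v) G'' _ (Classical.decRel _) w) δ) →
      (Matrix.det (@SimpleGraph.lapMatrix (Fin v) ℝ _ G'' (Classical.decRel _) _ _ +
          c • (1 : Matrix (Fin v) (Fin v) ℝ)) ≤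
        Matrix.det ((completeMultipartiteEqual m α).lapMatrix ℝ +
          c • (1 : Matrix (Fin m × Fin α) (Fin m × Fin α) ℝ)) ∧
       Matrix.trace (((completeMultipartiteEqual m α).lapMatrix ℝ +
          c • (1 : Matrix (Fin m × Fin α) (Fin m × Fin α) ℝ))⁻¹) ≤
        Matrix.trace ((@SimpleGraph.lapMatrix (Fin v) ℝ _ G'' (Classical.decRel _) _ _ +
          c • (1 : Matrix (Fin v) (Fin v) ℝ))⁻¹)) := fun G'' =>
    @Stmt19Aux.key_lemma α m v δ hα hm hv hδ G'' (Classical.decRel _)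
  choose F hF1 hF2 using key
  have hv1 : 1 ≤ v := by
    have := Nat.mul_le_mul hα hm
    omega
  refine ⟨Finset.univ.sup' ⟨⊥, Finset.mem_univ ⊥⟩ F, ?_, ?_⟩
  · exact lt_of_lt_of_le one_pos (le_trans (hF1 ⊥) (Finset.le_sup' F (Finset.mem_univ ⊥)))
  · intro x hx G' instG' hreg'
    have hinst : instG' = Classical.decRel G'.Adj :=
      funext fun a => funext fun b => Subsingleton.elim _ _
    subst hinst
    have hFx : F G' ≤ x := le_trans (Finset.le_sup' F (Finset.mem_univ G')) hx
    have hx1 : (1:ℝ) ≤ x := le_trans (hF1 G') hFx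
    have hvx : x ≤ (v:ℝ) * x := by
      have e1 : (1:ℝ) ≤ (v:ℝ) := by exact_mod_cast hv1
      nlinarith
    exact hF2 G' ((v:ℝ) * x) (le_trans hFx hvx) hreg'
end
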